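/- arXiv:1205.1090 — 4 statements merged into one kernel-verified Lean document; each statement's English description precedes it below -/
import Mathlib

section
/- Let P be a hierarchical poset on [n] (an ordinal sum of antichains) and 𝔽_q a finite field. Then the equivalence relation E_C on I(P), defined by (I,J) ∈ E_C iff |I| = |J|, is a MacWilliams-type equivalence relation: for all linear P-codes C₁, C₂ ⊆ 𝔽_q^n, if A_{Ī,E_C}(C₁) = A_{Ī,E_C}(C₂) for all order ideals I, then A_{J̄^c,E_C*}(C₁^⊥) = A_{J̄^c,E_C*}(C₂^⊥) for all order ideals J. (Theorem 4.1(ii), (a) ⇒ (b).) -/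
open scoped BigOperators
open Finset

noncomputable section
open scoped Classical

/-- `I ⊆ [n]` is an order ideal with respect to the order relation `le`. -/
def IsIdeal {n : ℕ} (le : Fin n → Fin n → Prop) (I : Finset (Fin n)) : Prop :=
  ∀ a ∈ I, ∀ b, le b a → b ∈ I

/-- `⟨X⟩_P` : the smallest order ideal (w.r.t. `le`) containing `X`. -/
def idealCl {n : ℕ} (le : Fin n → Fin n → Prop) (X : Finset (Fin n)) : Finset (Fin n) :=
  Finset.univ.filter fun b => ∃ a ∈ X, le b a

/-- `M(A)` : the set of maximal elements of `A` with respect to `le`. -/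
def maxSet {n : ℕ} (le : Fin n → Fin n → Prop) (A : Finset (Fin n)) : Finset (Fin n) :=
  A.filter fun a => ∀ b ∈ A, le a b → b = a

/-- `E` is an equivalence relation on the set of order ideals of the poset `le`. -/
def EqvOnIdeals {n : ℕ} (le : Fin n → Fin n → Prop)
    (E : Finset (Fin n) → Finset (Fin n) → Prop) : Prop :=
  (∀ I J, E I J → IsIdeal le I ∧ IsIdeal le J) ∧
  (∀ I, IsIdeal le I → E I I) ∧
  (∀ I J, E I J → E J I) ∧
  (∀ I J K, E I J → E J K → E I K)

/-- support of a vector -/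
def supp {n : ℕ} {F : Type} [Field F] [Fintype F] (v : Fin n → F) : Finset (Fin n) :=
  Finset.univ.filter fun i => v i ≠ 0

/-- standard dot product -/
def dot {n : ℕ} {F : Type} [Field F] [Fintype F] (u v : Fin n → F) : F := ∑ i, u i * v i

/-- the sphere `S_I = {v : ⟨supp v⟩_P = I}` -/
def sph {n : ℕ} (F : Type) [Field F] [Fintype F] (le : Fin n → Fin n → Prop)
    (I : Finset (Fin n)) : Finset (Fin n → F) :=
  Finset.univ.filter fun v => idealCl le (supp v) = I

/-- the dual sphere `S_{J^c} = {v : ⟨supp v⟩_{P*} = J^c}` -/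
def sphD {n : ℕ} (F : Type) [Field F] [Fintype F] (le : Fin n → Fin n → Prop)
    (J : Finset (Fin n)) : Finset (Fin n → F) :=
  Finset.univ.filter fun v => idealCl (fun a b => le b a) (supp v) = Jᶜ

/-- the `E`-sphere `S_{Ī,E} = {v : (⟨supp v⟩_P, I) ∈ E}` -/
def sphE {n : ℕ} (F : Type) [Field F] [Fintype F] (le : Fin n → Fin n → Prop)
    (E : Finset (Fin n) → Finset (Fin n) → Prop) (I : Finset (Fin n)) :
    Finset (Fin n → F) :=
  Finset.univ.filter fun v => E (idealCl le (supp v)) I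

/-- the `E*`-sphere `S_{J̄^c,E*} = {v : ⟨supp v⟩_{P*} = K^c for some ideal K with (K,J) ∈ E}` -/
def sphED {n : ℕ} (F : Type) [Field F] [Fintype F] (le : Fin n → Fin n → Prop)
    (E : Finset (Fin n) → Finset (Fin n) → Prop) (J : Finset (Fin n)) :
    Finset (Fin n → F) :=
  Finset.univ.filter fun v =>
    ∃ K, IsIdeal le K ∧ E K J ∧ idealCl (fun a b => le b a) (supp v) = Kᶜ

/-- the dual code `C^⊥` -/
def dualCode {n : ℕ} {F : Type} [Field F] [Fintype F] (C : Submodule F (Fin n → F)) :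
    Submodule F (Fin n → F) where
  carrier := {u | ∀ v ∈ C, dot u v = 0}
  zero_mem' := by intro v hv; simp [dot]
  add_mem' := by
    intro a b ha hb v hv
    have h1 := ha v hv
    have h2 := hb v hv
    simp only [dot, Pi.add_apply] at *
    simp [add_mul, Finset.sum_add_distrib, h1, h2]
  smul_mem' := by
    intro c a ha v hv
    have h1 := ha v hv
    simp only [dot, Pi.smul_apply, smul_eq_mul] at *
    simp [mul_assoc, ← Finset.mul_sum, h1]

/-- `A_{Ī,E}(C) = |C ∩ S_{Ī,E}|` -/
def AE {n : ℕ} {F : Type} [Field F] [Fintype F] (le : Fin n → Fin n → Prop)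
    (E : Finset (Fin n) → Finset (Fin n) → Prop)
    (C : Submodule F (Fin n → F)) (I : Finset (Fin n)) : ℕ :=
  ((sphE F le E I).filter fun v => v ∈ C).card

/-- `A_{J̄^c,E*}(D) = |D ∩ S_{J̄^c,E*}|` -/
def AED {n : ℕ} {F : Type} [Field F] [Fintype F] (le : Fin n → Fin n → Prop)
    (E : Finset (Fin n) → Finset (Fin n) → Prop)
    (D : Submodule F (Fin n → F)) (J : Finset (Fin n)) : ℕ :=
  ((sphED F le E J).filter fun v => v ∈ D).card

/-- `E` is a MacWilliams-type equivalence relation (w.r.t. the field `F`). -/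
def IsMacWilliamsType {n : ℕ} (F : Type) [Field F] [Fintype F]
    (le : Fin n → Fin n → Prop) (E : Finset (Fin n) → Finset (Fin n) → Prop) : Prop :=
  ∀ C₁ C₂ : Submodule F (Fin n → F),
    (∀ I, IsIdeal le I → AE le E C₁ I = AE le E C₂ I) →
    ∀ J, IsIdeal le J → AED le E (dualCode C₁) J = AED le E (dualCode C₂) J

/-- a hierarchical poset (ordinal sum of antichains) -/
def IsHierarchical {n : ℕ} (le : Fin n → Fin n → Prop) : Prop :=
  ∃ l : Fin n → ℕ, ∀ i j, (le i j ∧ i ≠ j) ↔ l i < l j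

/-- `σ` is an automorphism of the poset `le`. -/
def IsAut {n : ℕ} (le : Fin n → Fin n → Prop) (σ : Equiv.Perm (Fin n)) : Prop :=
  ∀ x y, le x y ↔ le (σ x) (σ y)

/-- `A` and `B` are order-isomorphic with the induced orders. -/
def OrdIso {n : ℕ} (le : Fin n → Fin n → Prop) (A B : Finset (Fin n)) : Prop :=
  ∃ e : {x // x ∈ A} ≃ {x // x ∈ B}, ∀ a b : {x // x ∈ A}, le ↑a ↑b ↔ le ↑(e a) ↑(e b)


/-!
Let `ℓ` be a level function of the hierarchical poset. An ideal is all of `{ℓ < s}` plus part of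
the level `{ℓ = s}`, so the size `k` of `⟨supp v⟩` determines the top level `s` of `supp v` and the
number `k - #{ℓ < s}` of coordinates of `v` on that level. Thus the `E_C`-distribution of `C`
amounts to the numbers of codewords supported in `{ℓ ≤ s}` with exactly `i` coordinates on level
`s`. Summing `|C ∩ V_{{ℓ < s} ∪ B}|` over the `m`-subsets `B` of level `s` turns these numbers into
a unitriangular binomial system. The identity `|C^⊥ ∩ V_T| |C| = q^|T| |C ∩ V_{Tᶜ}|` (rank–nullity
for the dot-product pairing), applied to `T = {ℓ > s} ∪ A`, transports these sums from `C` to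
`C^⊥` and the reversed levels, and inverting the system there gives the `E_C*`-distribution of
`C^⊥`.
-/

open Module

theorem LinearMap.finrank_ker_add_finrank_eq_add_finrank_ker_flip {K V W : Type*} [Field K]
    [AddCommGroup V] [Module K V] [FiniteDimensional K V]
    [AddCommGroup W] [Module K W] [FiniteDimensional K W] (B : V →ₗ[K] Module.Dual K W) :
    finrank K (ker B) + finrank K W = finrank K V + finrank K (ker B.flip) := by
  have hB := B.finrank_range_add_finrank_ker
  have hBflip := Subspace.finrank_add_finrank_dualCoannihilator_eq (range B)
  rw [dualCoannihilator_range_eq_ker_flip] at hBflip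
  omega

namespace Finset

/-- The exponent `#L - m` (rather than `m - #A`) makes the count vanish for `m < #A` as well. -/
lemma card_filter_powersetCard_superset {α : Type*} [DecidableEq α] {A L : Finset α}
    (hAL : A ⊆ L) {m : ℕ} (hm : m ≤ #L) :
    #{B ∈ L.powersetCard m | A ⊆ B} = (#L - #A).choose (#L - m) := by
  have hAL' := card_le_card hAL
  by_cases hAm : #A ≤ m
  · rw [card_filter_powersetCard_subset A L m hAL hAm, ← Nat.choose_symm (by omega)]
    congr 1
    omega
  · rw [Nat.choose_eq_zero_of_lt (by omega), card_eq_zero, filter_eq_empty_iff]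
    intro B hB hAB
    have := card_le_card hAB
    rw [(mem_powersetCard.1 hB).2] at this
    omega

lemma sum_powersetCard_sdiff {α β : Type*} [DecidableEq α] [AddCommMonoid β] (L : Finset α)
    (f : Finset α → β) {j : ℕ} (hj : j ≤ #L) :
    ∑ A ∈ L.powersetCard j, f (L \ A) = ∑ B ∈ L.powersetCard (#L - j), f B := by
  refine sum_nbij' (L \ ·) (L \ ·) (fun A hA => ?_) (fun B hB => ?_) (fun A hA => ?_)
    (fun B hB => ?_) (fun _ _ => rfl)
  · rw [mem_powersetCard] at hA ⊢
    exact ⟨sdiff_subset, by rw [card_sdiff_of_subset hA.1, hA.2]⟩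
  · rw [mem_powersetCard] at hB ⊢
    exact ⟨sdiff_subset, by rw [card_sdiff_of_subset hB.1, hB.2]; omega⟩
  · exact Finset.sdiff_sdiff_eq_self (mem_powersetCard.1 hA).1
  · exact Finset.sdiff_sdiff_eq_self (mem_powersetCard.1 hB).1

lemma card_filter_eq_of_card_fiber_eq {β : Type*} [Fintype β] {P Q : β → Prop} {f : β → ℕ}
    (h : ∀ k, #{x | P x ∧ f x = k} = #{x | Q x ∧ f x = k}) (p : ℕ → Prop) :
    #{x | P x ∧ p (f x)} = #{x | Q x ∧ p (f x)} := by
  have hfiber : ∀ R : β → Prop,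
      #{x | R x ∧ p (f x)} = ∑ k ∈ {k ∈ univ.image f | p k}, #{x | R x ∧ f x = k} := by
    intro R
    rw [card_eq_sum_card_fiberwise fun x hx =>
      mem_filter.2 ⟨mem_image_of_mem f (mem_univ x), (mem_filter.1 hx).2.2⟩]
    refine sum_congr rfl fun k hk => ?_
    rw [filter_filter]
    exact congrArg card (filter_congr fun x _ =>
      ⟨fun h => ⟨h.1.1, h.2⟩, fun h => ⟨⟨h.1, h.2 ▸ (mem_filter.1 hk).2⟩, h.2⟩⟩)
  simp only [hfiber, h]

end Finset

namespace PosetCode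

/-- The system is unitriangular: the coefficient of `x i` in equation `m` is `1` for `i = m` and
`0` for `i > m`. -/
lemma eq_of_sum_choose_mul_eq {K : ℕ} {x y : ℕ → ℕ}
    (h : ∀ m ≤ K, ∑ i ∈ range (K + 1), (K - i).choose (K - m) * x i
      = ∑ i ∈ range (K + 1), (K - i).choose (K - m) * y i) :
    ∀ i ≤ K, x i = y i := by
  intro i
  induction i using Nat.strong_induction_on with
  | _ i ih =>
    intro hi
    have hdiff : ∑ i' ∈ range (K + 1), ((K - i').choose (K - i) : ℤ) * ((x i' : ℤ) - y i') = 0 := by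
      simp only [mul_sub, sum_sub_distrib, sub_eq_zero]
      exact_mod_cast h i hi
    rw [sum_eq_single_of_mem i (mem_range.2 (by omega)) fun i' hi' hne => ?_] at hdiff
    · simpa [sub_eq_zero] using hdiff
    · rcases lt_or_gt_of_ne hne with hlt | hgt
      · rw [ih i' hlt (by omega), sub_self, mul_zero]
      · rw [mem_range] at hi'
        rw [Nat.choose_eq_zero_of_lt (by omega), Nat.cast_zero, zero_mul]

variable {n : ℕ} {F : Type} [Field F] [Fintype F]

lemma supp_eq_empty {v : Fin n → F} : supp v = ∅ ↔ v = 0 := by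
  simp [supp, filter_eq_empty_iff, funext_iff]

variable (F) in
def supported (T : Finset (Fin n)) : Submodule F (Fin n → F) where
  carrier := {v | ∀ i ∉ T, v i = 0}
  zero_mem' _ _ := rfl
  add_mem' ha hb i hi := by simp [ha i hi, hb i hi]
  smul_mem' _ _ ha i hi := by simp [ha i hi]

lemma mem_supported {T : Finset (Fin n)} {v : Fin n → F} : v ∈ supported F T ↔ supp v ⊆ T := by
  simp only [Finset.subset_iff, supp, mem_filter, mem_univ, true_and]
  exact forall_congr' fun i => not_imp_comm

omit [Fintype F] in
lemma finrank_supported (T : Finset (Fin n)) : finrank F (supported F T) = #T := by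
  let e : supported F T ≃ₗ[F] (T → F) :=
    { toFun v i := (v : Fin n → F) i
      map_add' _ _ := rfl
      map_smul' _ _ := rfl
      invFun g := ⟨fun j => if h : j ∈ T then g ⟨j, h⟩ else 0, fun _ hi => dif_neg hi⟩
      left_inv v := by
        ext j
        by_cases h : j ∈ T
        · simp [h]
        · simp [h, v.2 j h]
      right_inv g := by ext i; simp }
  rw [e.finrank_eq, Module.finrank_fintype_fun_eq_card, Fintype.card_coe]

lemma finrank_dualCode_inf_supported_add (C : Submodule F (Fin n → F)) (T : Finset (Fin n)) :
    finrank F ↥(dualCode C ⊓ supported F T) + finrank F C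
      = #T + finrank F ↥(C ⊓ supported F Tᶜ) := by
  let B : supported F T →ₗ[F] Module.Dual F C := (dotProductBilin F F).domRestrict₁₂ _ _
  have hker : LinearMap.ker B = (dualCode C ⊓ supported F T).comap (supported F T).subtype := by
    ext v
    simp only [LinearMap.mem_ker, Submodule.mem_comap, Submodule.mem_inf, Submodule.subtype_apply,
      v.2, and_true, LinearMap.ext_iff, Subtype.forall]
    rfl
  have hker_flip : LinearMap.ker B.flip = (C ⊓ supported F Tᶜ).comap C.subtype := by
    ext c
    simp only [LinearMap.mem_ker, Submodule.mem_comap, Submodule.mem_inf, Submodule.subtype_apply,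
      c.2, true_and, LinearMap.ext_iff, Subtype.forall]
    constructor
    · intro h i hi
      have hsingle : Pi.single i 1 ∈ supported F T := fun j hj =>
        Pi.single_eq_of_ne (by rintro rfl; simp_all) _
      simpa [B, LinearMap.domRestrict₁₂_apply, dotProductBilin_apply_apply, single_dotProduct]
        using h _ hsingle
    · intro h v hv
      simp only [B, LinearMap.flip_apply, LinearMap.domRestrict₁₂_apply,
        dotProductBilin_apply_apply, LinearMap.zero_apply]
      refine Finset.sum_eq_zero fun i _ => ?_
      by_cases hi : i ∈ T
      · simp [h i (by simpa using hi)]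
      · simp [hv i hi]
  have key := B.finrank_ker_add_finrank_eq_add_finrank_ker_flip
  rwa [hker, hker_flip, (Submodule.comapSubtypeEquivOfLe inf_le_right).finrank_eq,
    (Submodule.comapSubtypeEquivOfLe inf_le_left).finrank_eq, finrank_supported] at key

def supportedCount (C : Submodule F (Fin n → F)) (T : Finset (Fin n)) : ℕ :=
  #{v | v ∈ C ∧ supp v ⊆ T}

lemma supportedCount_eq_pow (C : Submodule F (Fin n → F)) (T : Finset (Fin n)) :
    supportedCount C T = Fintype.card F ^ finrank F ↥(C ⊓ supported F T) := by
  rw [← Module.card_eq_pow_finrank, Fintype.card_subtype, supportedCount]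
  simp only [Submodule.mem_inf, mem_supported]

lemma supportedCount_pos (C : Submodule F (Fin n → F)) (T : Finset (Fin n)) :
    0 < supportedCount C T := by
  rw [supportedCount_eq_pow]
  exact pow_pos Fintype.card_pos _

lemma supportedCount_dualCode_mul (C : Submodule F (Fin n → F)) (T : Finset (Fin n)) :
    supportedCount (dualCode C) T * supportedCount C univ
      = Fintype.card F ^ #T * supportedCount C Tᶜ := by
  have hC : C ⊓ supported F univ = C := inf_eq_left.2 fun v _ => mem_supported.2 (subset_univ _)
  rw [supportedCount_eq_pow, supportedCount_eq_pow, supportedCount_eq_pow, hC, ← pow_add,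
    ← pow_add, finrank_dualCode_inf_supported_add]

def layerCount (C : Submodule F (Fin n → F)) (M L : Finset (Fin n)) (i : ℕ) : ℕ :=
  #{v | v ∈ C ∧ supp v ⊆ M ∪ L ∧ #(supp v ∩ L) = i}

lemma layerCount_eq_zero_of_card_lt (C : Submodule F (Fin n → F)) (M : Finset (Fin n))
    {L : Finset (Fin n)} {i : ℕ} (hi : #L < i) : layerCount C M L i = 0 := by
  refine card_eq_zero.2 (filter_eq_empty_iff.2 fun v _ ⟨_, _, hv⟩ => ?_)
  have := card_le_card (inter_subset_right (s₁ := supp v) (s₂ := L))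
  omega

lemma sum_powersetCard_supportedCount {M L : Finset (Fin n)} (hLM : Disjoint L M)
    (C : Submodule F (Fin n → F)) {m : ℕ} (hm : m ≤ #L) :
    ∑ B ∈ L.powersetCard m, supportedCount C (M ∪ B)
      = ∑ i ∈ range (#L + 1), (#L - i).choose (#L - m) * layerCount C M L i := by
  have hsplit : ∀ (v : Fin n → F) B, B ⊆ L →
      (supp v ⊆ M ∪ B ↔ supp v ⊆ M ∪ L ∧ supp v ∩ L ⊆ B) := by
    intro v B hB
    constructor
    · intro h
      refine ⟨h.trans (union_subset_union_right hB), fun x hx => ?_⟩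
      rw [mem_inter] at hx
      exact (mem_union.1 (h hx.1)).resolve_left (disjoint_left.1 hLM hx.2)
    · rintro ⟨h, hL⟩ x hx
      exact mem_union.2 ((mem_union.1 (h hx)).imp_right fun hxL => hL (mem_inter.2 ⟨hx, hxL⟩))
  let S : Finset (Fin n → F) := {v | v ∈ C ∧ supp v ⊆ M ∪ L}
  calc ∑ B ∈ L.powersetCard m, supportedCount C (M ∪ B)
      = ∑ v ∈ S, #{B ∈ L.powersetCard m | supp v ∩ L ⊆ B} := by
        simp only [supportedCount, card_filter, S, sum_filter]
        rw [sum_comm]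
        refine sum_congr rfl fun v _ => ?_
        split_ifs with hv
        · refine sum_congr rfl fun B hB => ?_
          simp only [hsplit v B (mem_powersetCard.1 hB).1, hv]
          simp
        · refine sum_eq_zero fun B hB => if_neg ?_
          rw [hsplit v B (mem_powersetCard.1 hB).1]
          tauto
    _ = ∑ v ∈ S, (#L - #(supp v ∩ L)).choose (#L - m) :=
        sum_congr rfl fun v _ => card_filter_powersetCard_superset inter_subset_right hm
    _ = ∑ i ∈ range (#L + 1), ∑ v ∈ S with #(supp v ∩ L) = i, (#L - i).choose (#L - m) := by
        rw [← sum_fiberwise_of_maps_to (g := fun v : Fin n → F => #(supp v ∩ L)) fun v _ =>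
          mem_range.2 (Nat.lt_succ_of_le (card_le_card inter_subset_right))]
        refine sum_congr rfl fun i _ => sum_congr rfl fun v hv => ?_
        rw [(mem_filter.1 hv).2]
    _ = _ := by
        refine sum_congr rfl fun i _ => ?_
        rw [sum_const, smul_eq_mul, mul_comm, layerCount, filter_filter]
        simp only [and_assoc]

lemma compl_compl_union_union_eq {α : Type*} [Fintype α] [DecidableEq α] {M L A : Finset α}
    (hML : Disjoint M L) (hAL : A ⊆ L) : ((M ∪ L)ᶜ ∪ A)ᶜ = M ∪ (L \ A) := by
  ext x
  have hA := @hAL x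
  have hM : x ∈ M → x ∉ L := fun h => disjoint_left.1 hML h
  simp only [mem_compl, mem_union, mem_sdiff]
  tauto

lemma sum_powersetCard_supportedCount_dualCode_mul {M L : Finset (Fin n)} (hML : Disjoint M L)
    (C : Submodule F (Fin n → F)) {j : ℕ} (hj : j ≤ #L) :
    (∑ A ∈ L.powersetCard j, supportedCount (dualCode C) ((M ∪ L)ᶜ ∪ A)) * supportedCount C univ
      = Fintype.card F ^ (#(M ∪ L)ᶜ + j) *
          ∑ B ∈ L.powersetCard (#L - j), supportedCount C (M ∪ B) := by
  rw [sum_mul, ← sum_powersetCard_sdiff L _ hj, mul_sum]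
  refine sum_congr rfl fun A hA => ?_
  obtain ⟨hAL, rfl⟩ := mem_powersetCard.1 hA
  have hdisj : Disjoint (M ∪ L)ᶜ A := disjoint_compl_left_iff.2 (hAL.trans subset_union_right)
  rw [supportedCount_dualCode_mul, card_union_of_disjoint hdisj,
    compl_compl_union_union_eq hML hAL]

lemma layerCount_dualCode_eq {C₁ C₂ : Submodule F (Fin n → F)} {M L : Finset (Fin n)}
    (hML : Disjoint M L) (hcard : supportedCount C₁ univ = supportedCount C₂ univ)
    (h : ∀ i, layerCount C₁ M L i = layerCount C₂ M L i) (i : ℕ) :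
    layerCount (dualCode C₁) (M ∪ L)ᶜ L i = layerCount (dualCode C₂) (M ∪ L)ᶜ L i := by
  rcases le_or_gt i #L with hi | hi
  · refine eq_of_sum_choose_mul_eq (fun j hj => ?_) i hi
    have hdisj : Disjoint L (M ∪ L)ᶜ := disjoint_compl_right_iff.2 subset_union_right
    rw [← sum_powersetCard_supportedCount hdisj _ hj, ← sum_powersetCard_supportedCount hdisj _ hj]
    refine Nat.eq_of_mul_eq_mul_right (supportedCount_pos C₁ univ) ?_
    rw [sum_powersetCard_supportedCount_dualCode_mul hML _ hj, hcard,
      sum_powersetCard_supportedCount_dualCode_mul hML _ hj,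
      sum_powersetCard_supportedCount hML.symm _ (Nat.sub_le _ _),
      sum_powersetCard_supportedCount hML.symm _ (Nat.sub_le _ _)]
    simp only [h]
  · rw [layerCount_eq_zero_of_card_lt _ _ hi, layerCount_eq_zero_of_card_lt _ _ hi]

def closureCount (le : Fin n → Fin n → Prop) (C : Submodule F (Fin n → F)) (k : ℕ) : ℕ :=
  #{v | v ∈ C ∧ #(idealCl le (supp v)) = k}

lemma supportedCount_univ_eq_of_closureCount_eq {le : Fin n → Fin n → Prop}
    {C₁ C₂ : Submodule F (Fin n → F)} (h : ∀ k, closureCount le C₁ k = closureCount le C₂ k) :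
    supportedCount C₁ univ = supportedCount C₂ univ := by
  simpa [supportedCount] using card_filter_eq_of_card_fiber_eq h fun _ => True

section Levels

variable {α : Type*} [LinearOrder α]

def IsLevelFunction (le : Fin n → Fin n → Prop) (ℓ : Fin n → α) : Prop :=
  ∀ i j, le i j ↔ i = j ∨ ℓ i < ℓ j

lemma exists_isLevelFunction_of_isHierarchical {le : Fin n → Fin n → Prop} [Std.Refl le]
    (h : IsHierarchical le) : ∃ ℓ : Fin n → ℕ, IsLevelFunction le ℓ := by
  obtain ⟨ℓ, hℓ⟩ := h
  refine ⟨ℓ, fun i j => ⟨fun hij => ?_, ?_⟩⟩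
  · by_cases hne : i = j
    exacts [Or.inl hne, Or.inr ((hℓ i j).1 ⟨hij, hne⟩)]
  · rintro (rfl | hlt)
    exacts [refl_of le i, ((hℓ i j).2 hlt).1]

def below (ℓ : Fin n → α) (s : α) : Finset (Fin n) := {i | ℓ i < s}

def level (ℓ : Fin n → α) (s : α) : Finset (Fin n) := {i | ℓ i = s}

@[simp] lemma mem_below {ℓ : Fin n → α} {s : α} {i : Fin n} : i ∈ below ℓ s ↔ ℓ i < s := by
  simp [below]

@[simp] lemma mem_level {ℓ : Fin n → α} {s : α} {i : Fin n} : i ∈ level ℓ s ↔ ℓ i = s := by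
  simp [level]

lemma mem_below_union_level {ℓ : Fin n → α} {s : α} {i : Fin n} :
    i ∈ below ℓ s ∪ level ℓ s ↔ ℓ i ≤ s := by
  simp [le_iff_lt_or_eq]

lemma disjoint_below_level (ℓ : Fin n → α) (s : α) : Disjoint (below ℓ s) (level ℓ s) :=
  disjoint_left.2 fun _ hi hi' => (mem_below.1 hi).ne (mem_level.1 hi')

lemma below_toDual (ℓ : Fin n → α) (s : αᵒᵈ) :
    below (OrderDual.toDual ∘ ℓ) s
      = (below ℓ (OrderDual.ofDual s) ∪ level ℓ (OrderDual.ofDual s))ᶜ := by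
  ext i
  simp only [mem_below, mem_compl, mem_below_union_level, Function.comp_apply, not_le]
  exact OrderDual.toDual_lt

lemma level_toDual (ℓ : Fin n → α) (s : αᵒᵈ) :
    level (OrderDual.toDual ∘ ℓ) s = level ℓ (OrderDual.ofDual s) := by
  ext i
  simp only [mem_level, Function.comp_apply]
  exact OrderDual.toDual_inj (b := OrderDual.ofDual s)

def IsLevelCut (ℓ : Fin n → α) (D : Finset (Fin n)) : Prop := ∀ a ∈ D, ∀ b ∉ D, ℓ a < ℓ b

lemma isLevelCut_below (ℓ : Fin n → α) (s : α) : IsLevelCut ℓ (below ℓ s) := by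
  simp only [IsLevelCut, mem_below, not_lt]
  exact fun a ha b hb => ha.trans_le hb

lemma isLevelCut_below_union_level (ℓ : Fin n → α) (s : α) :
    IsLevelCut ℓ (below ℓ s ∪ level ℓ s) := by
  simp only [IsLevelCut, mem_below_union_level, not_le]
  exact fun a ha b hb => ha.trans_lt hb

variable {le : Fin n → Fin n → Prop} {ℓ : Fin n → α}

lemma subset_idealCl (hℓ : IsLevelFunction le ℓ) (S : Finset (Fin n)) : S ⊆ idealCl le S :=
  fun a ha => mem_filter.2 ⟨mem_univ a, a, ha, (hℓ a a).2 (Or.inl rfl)⟩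

lemma le_trans_of_isLevelFunction (hℓ : IsLevelFunction le ℓ) {a b c : Fin n}
    (hab : le a b) (hbc : le b c) : le a c := by
  rw [hℓ a b] at hab
  rw [hℓ b c] at hbc
  rw [hℓ a c]
  rcases hab with rfl | hab <;> rcases hbc with rfl | hbc
  exacts [Or.inl rfl, Or.inr hbc, Or.inr hab, Or.inr (hab.trans hbc)]

lemma isIdeal_idealCl (hℓ : IsLevelFunction le ℓ) (S : Finset (Fin n)) :
    IsIdeal le (idealCl le S) := by
  intro a ha b hba
  obtain ⟨c, hc, hac⟩ := (mem_filter.1 ha).2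
  exact mem_filter.2 ⟨mem_univ b, c, hc, le_trans_of_isLevelFunction hℓ hba hac⟩

lemma idealCl_subset_iff (hℓ : IsLevelFunction le ℓ) {D : Finset (Fin n)} (hD : IsIdeal le D)
    {S : Finset (Fin n)} : idealCl le S ⊆ D ↔ S ⊆ D := by
  refine ⟨(subset_idealCl hℓ S).trans, fun hS b hb => ?_⟩
  obtain ⟨a, ha, hba⟩ := (mem_filter.1 hb).2
  exact hD a (hS ha) b hba

lemma idealCl_empty : idealCl le (∅ : Finset (Fin n)) = ∅ := by
  simp [idealCl]

namespace IsLevelCut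

variable {D : Finset (Fin n)}

lemma isIdeal (hℓ : IsLevelFunction le ℓ) (hD : IsLevelCut ℓ D) : IsIdeal le D := by
  intro a ha b hba
  by_contra hb
  rcases (hℓ b a).1 hba with rfl | hlt
  · exact hb ha
  · exact lt_asymm hlt (hD a ha b hb)

lemma subset_or_superset (hℓ : IsLevelFunction le ℓ) (hD : IsLevelCut ℓ D)
    {I : Finset (Fin n)} (hI : IsIdeal le I) : I ⊆ D ∨ D ⊆ I := by
  by_contra! h
  obtain ⟨b, hbI, hbD⟩ := not_subset.1 h.1
  obtain ⟨a, haD, haI⟩ := not_subset.1 h.2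
  exact haI (hI b hbI a ((hℓ a b).2 (Or.inr (hD a haD b hbD))))

lemma subset_iff_card_le (hℓ : IsLevelFunction le ℓ) (hD : IsLevelCut ℓ D)
    {I : Finset (Fin n)} (hI : IsIdeal le I) : I ⊆ D ↔ #I ≤ #D := by
  refine ⟨card_le_card, fun h => ?_⟩
  rcases hD.subset_or_superset hℓ hI with hID | hDI
  · exact hID
  · exact (eq_of_subset_of_card_le hDI h).ge

end IsLevelCut

lemma inter_level_eq_idealCl_sdiff_below (hℓ : IsLevelFunction le ℓ) {S : Finset (Fin n)}
    {s : α} (hS : S ⊆ below ℓ s ∪ level ℓ s) : S ∩ level ℓ s = idealCl le S \ below ℓ s := by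
  ext x
  simp only [mem_inter, mem_sdiff, mem_level, mem_below, not_lt]
  constructor
  · rintro ⟨hx, rfl⟩
    exact ⟨subset_idealCl hℓ S hx, le_rfl⟩
  · rintro ⟨hx, hsx⟩
    obtain ⟨a, ha, hxa⟩ := (mem_filter.1 hx).2
    have has := mem_below_union_level.1 (hS ha)
    rcases (hℓ x a).1 hxa with rfl | hlt
    · exact ⟨ha, le_antisymm has hsx⟩
    · exact absurd (hlt.trans_le has) hsx.not_gt

lemma subset_below_union_level_and_card_inter_iff (hℓ : IsLevelFunction le ℓ)
    (S : Finset (Fin n)) (s : α) (i : ℕ) :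
    (S ⊆ below ℓ s ∪ level ℓ s ∧ #(S ∩ level ℓ s) = i) ↔
      (#(idealCl le S) ≤ #(below ℓ s ∪ level ℓ s) ∧ #(idealCl le S) - #(below ℓ s) = i) := by
  have hcl := isIdeal_idealCl hℓ S
  have hD := isLevelCut_below_union_level ℓ s
  rw [← hD.subset_iff_card_le hℓ hcl, idealCl_subset_iff hℓ (hD.isIdeal hℓ)]
  refine and_congr_right fun hS => ?_
  rw [inter_level_eq_idealCl_sdiff_below hℓ hS]
  rcases (isLevelCut_below ℓ s).subset_or_superset hℓ hcl with hK | hK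
  · rw [sdiff_eq_empty_iff_subset.2 hK, card_empty, Nat.sub_eq_zero_of_le (card_le_card hK)]
  · rw [card_sdiff_of_subset hK]

lemma exists_card_below_lt_card_idealCl (hℓ : IsLevelFunction le ℓ) {S : Finset (Fin n)}
    (hS : S.Nonempty) :
    ∃ s, #(below ℓ s) < #(idealCl le S) ∧ #(idealCl le S) ≤ #(below ℓ s ∪ level ℓ s) := by
  obtain ⟨a, haS, hmax⟩ := exists_max_image S ℓ hS
  refine ⟨ℓ a, ?_, card_le_card ?_⟩
  · have ha := subset_idealCl hℓ S haS
    have ha' : a ∉ below ℓ (ℓ a) := by simp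
    rcases (isLevelCut_below ℓ (ℓ a)).subset_or_superset hℓ (isIdeal_idealCl hℓ S) with h | h
    · exact absurd (h ha) ha'
    · exact card_lt_card ⟨h, fun h' => ha' (h' ha)⟩
  · rw [idealCl_subset_iff hℓ ((isLevelCut_below_union_level ℓ (ℓ a)).isIdeal hℓ)]
    exact fun x hx => mem_below_union_level.2 (hmax x hx)

lemma layerCount_eq_of_closureCount_eq (hℓ : IsLevelFunction le ℓ)
    {C₁ C₂ : Submodule F (Fin n → F)} (h : ∀ k, closureCount le C₁ k = closureCount le C₂ k)
    (s : α) (i : ℕ) :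
    layerCount C₁ (below ℓ s) (level ℓ s) i = layerCount C₂ (below ℓ s) (level ℓ s) i := by
  simp only [layerCount, subset_below_union_level_and_card_inter_iff hℓ]
  convert card_filter_eq_of_card_fiber_eq h
    fun k => k ≤ #(below ℓ s ∪ level ℓ s) ∧ k - #(below ℓ s) = i

lemma closureCount_eq_layerCount (hℓ : IsLevelFunction le ℓ) {s : α} {k : ℕ}
    (h₁ : #(below ℓ s) < k) (h₂ : k ≤ #(below ℓ s ∪ level ℓ s)) (C : Submodule F (Fin n → F)) :
    closureCount le C k = layerCount C (below ℓ s) (level ℓ s) (k - #(below ℓ s)) := by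
  simp only [closureCount, layerCount, subset_below_union_level_and_card_inter_iff hℓ]
  exact congrArg card (filter_congr fun v _ => and_congr_right fun _ => by omega)

lemma closureCount_eq_ite (hℓ : IsLevelFunction le ℓ) {k : ℕ}
    (hk : ∀ s, #(below ℓ s) < k → #(below ℓ s ∪ level ℓ s) < k) (C : Submodule F (Fin n → F)) :
    closureCount le C k = if k = 0 then 1 else 0 := by
  have hzero : ∀ v : Fin n → F, v ∈ C ∧ #(idealCl le (supp v)) = k ↔ v = 0 ∧ k = 0 := by
    intro v
    constructor
    · rintro ⟨-, rfl⟩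
      obtain hv | hv := (supp v).eq_empty_or_nonempty
      · exact ⟨supp_eq_empty.1 hv, by rw [hv, idealCl_empty, card_empty]⟩
      · obtain ⟨s, h₁, h₂⟩ := exists_card_below_lt_card_idealCl hℓ hv
        exact absurd (hk s h₁) h₂.not_gt
    · rintro ⟨rfl, rfl⟩
      simp [C.zero_mem, supp_eq_empty.2 rfl, idealCl_empty]
  rw [closureCount, filter_congr fun v _ => hzero v]
  split_ifs with h0 <;> simp [h0, filter_eq']

lemma closureCount_eq_of_layerCount_eq (hℓ : IsLevelFunction le ℓ)
    {C₁ C₂ : Submodule F (Fin n → F)}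
    (h : ∀ s i, layerCount C₁ (below ℓ s) (level ℓ s) i = layerCount C₂ (below ℓ s) (level ℓ s) i)
    (k : ℕ) : closureCount le C₁ k = closureCount le C₂ k := by
  by_cases hk : ∃ s, #(below ℓ s) < k ∧ k ≤ #(below ℓ s ∪ level ℓ s)
  · obtain ⟨s, h₁, h₂⟩ := hk
    rw [closureCount_eq_layerCount hℓ h₁ h₂, closureCount_eq_layerCount hℓ h₁ h₂, h]
  · push Not at hk
    rw [closureCount_eq_ite hℓ hk, closureCount_eq_ite hℓ hk]

lemma closureCount_eq_of_AE_eq (hℓ : IsLevelFunction le ℓ) {C₁ C₂ : Submodule F (Fin n → F)}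
    (h : ∀ I, IsIdeal le I → AE le (fun A B => #A = #B) C₁ I = AE le (fun A B => #A = #B) C₂ I)
    (k : ℕ) : closureCount le C₁ k = closureCount le C₂ k := by
  have hAE : ∀ (C : Submodule F (Fin n → F)) (I : Finset (Fin n)),
      AE le (fun A B => #A = #B) C I = closureCount le C #I := fun C I => by
    simp only [AE, sphE, closureCount, filter_filter]
    exact congrArg card (filter_congr fun _ _ => and_comm)
  by_cases hk : ∃ I, IsIdeal le I ∧ #I = k
  · obtain ⟨I, hI, rfl⟩ := hk
    rw [← hAE, ← hAE, h I hI]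
  · have hzero : ∀ C : Submodule F (Fin n → F), closureCount le C k = 0 := fun C =>
      card_eq_zero.2 (filter_eq_empty_iff.2 fun v _ hv => hk ⟨_, isIdeal_idealCl hℓ _, hv.2⟩)
    rw [hzero, hzero]

lemma AED_eq_closureCount (hℓ : IsLevelFunction (fun a b => le b a) ℓ)
    (D : Submodule F (Fin n → F)) (J : Finset (Fin n)) :
    AED le (fun A B => #A = #B) D J = closureCount (fun a b => le b a) D (n - #J) := by
  simp only [AED, sphED, closureCount, filter_filter]
  refine congrArg card (filter_congr fun v _ => ?_)
  rw [and_comm]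
  refine and_congr_right fun _ => ⟨?_, fun hv => ?_⟩
  · rintro ⟨K, -, hK, hcl⟩
    rw [hcl, card_compl, Fintype.card_fin, hK]
  · refine ⟨_, fun a ha b hba => mem_compl.2 fun hb =>
      mem_compl.1 ha (isIdeal_idealCl hℓ _ b hb a hba), ?_, (compl_compl _).symm⟩
    have hJ := card_le_univ J
    rw [Fintype.card_fin] at hJ
    rw [card_compl, hv, Fintype.card_fin]
    omega

end Levels

end PosetCode

open PosetCode

theorem stmt_14_general {n : ℕ} (le : Fin n → Fin n → Prop)
    [IsPartialOrder (Fin n) le]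
    (F : Type) [Field F] [Fintype F]
    (hhier : IsHierarchical le) :
    IsMacWilliamsType F le (fun A B => A.card = B.card) := by
  obtain ⟨ℓ, hℓ⟩ := exists_isLevelFunction_of_isHierarchical hhier
  have hℓdual : IsLevelFunction (fun a b => le b a) (OrderDual.toDual ∘ ℓ) :=
    fun i j => (hℓ j i).trans (or_congr eq_comm Iff.rfl)
  intro C₁ C₂ hA J _
  have hW := closureCount_eq_of_AE_eq hℓ hA
  have hWdual := closureCount_eq_of_layerCount_eq (C₁ := dualCode C₁) (C₂ := dualCode C₂) hℓdual
    fun s i => by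
      rw [below_toDual, level_toDual]
      exact layerCount_dualCode_eq (disjoint_below_level ℓ _)
        (supportedCount_univ_eq_of_closureCount_eq hW) (layerCount_eq_of_closureCount_eq hℓ hW _) i
  rw [AED_eq_closureCount hℓdual, AED_eq_closureCount hℓdual, hWdual]

/-- Theorem 4.1(ii), (a) ⇒ (b): if `P` is hierarchical then `E_C` is of MacWilliams type. -/
theorem stmt_14 {n : ℕ} (hn : 0 < n) (le : Fin n → Fin n → Prop)
    [IsPartialOrder (Fin n) le]
    (F : Type) [Field F] [Fintype F]
    (hhier : IsHierarchical le) :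
    IsMacWilliamsType F le (fun A B => A.card = B.card) :=
  stmt_14_general le F hhier

end
end

section
/- Let P be a poset on [n] and 𝔽_q a finite field. If the equivalence relation E_C on I(P), defined by (I,J) ∈ E_C iff |I| = |J|, is a MacWilliams-type equivalence relation (for all linear P-codes C₁, C₂ ⊆ 𝔽_q^n, A_{Ī,E_C}(C₁) = A_{Ī,E_C}(C₂) for all order ideals I implies A_{J̄^c,E_C*}(C₁^⊥) = A_{J̄^c,E_C*}(C₂^⊥) for all order ideals J), then P is a hierarchical poset. (Theorem 4.1(ii), (b) ⇒ (a).) -/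
open scoped BigOperators
open Finset

noncomputable section
open scoped Classical

/-!
Suppose `P` is not hierarchical. Then there is an order ideal `J` lying below every element
outside it, and an element `i ∉ J` which is neither minimal in `Jᶜ` nor above all minimal
elements of `Jᶜ`, while everything strictly below `i` is in `J` or minimal in `Jᶜ`.
Let `G` be the set of minimal elements of `Jᶜ` and pick `S ⊆ G` with `|S| = |⟨i⟩ \ J| ≤ |G|`.
Every nonzero word of the code spanned by `e_i`, or by the indicator of `S`, generates an ideal
of size `|J| + |S|`, so the two codes have the same `E_C`-distribution. On the dual side `J` is
the only ideal of its size, and `⟨supp u⟩_{P*} = Jᶜ` iff `G ⊆ supp u ⊆ Jᶜ`. With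
`d = |Jᶜ \ G| ≥ 1`, the dual of the first code has `(q - 1)^|G| q^(d - 1)` such words, while
for the second code the coordinates in `Jᶜ \ G` are free, so their number is divisible by `q^d`.
-/

section Layers

variable {n : ℕ} {le : Fin n → Fin n → Prop}

/-- In a hierarchical poset the layered ideals are exactly the unions of the lowest levels. -/
def IsLayered (le : Fin n → Fin n → Prop) (J : Finset (Fin n)) : Prop :=
  IsIdeal le J ∧ ∀ a ∈ J, ∀ x ∉ J, le a x

def nextLayer (le : Fin n → Fin n → Prop) (J : Finset (Fin n)) : Finset (Fin n) :=
  maxSet (fun a b => le b a) Jᶜ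

lemma mem_nextLayer {J : Finset (Fin n)} {g : Fin n} :
    g ∈ nextLayer le J ↔ g ∉ J ∧ ∀ b ∉ J, le b g → b = g := by
  simp [nextLayer, maxSet]

lemma isLayered_empty : IsLayered le ∅ :=
  ⟨fun a ha => absurd ha (notMem_empty a), fun a ha => absurd ha (notMem_empty a)⟩

lemma IsLayered.union_nextLayer {J : Finset (Fin n)} (hJ : IsLayered le J)
    (hnext : ∀ i ∉ J, i ∉ nextLayer le J → ∀ z ∈ nextLayer le J, le z i) :
    IsLayered le (J ∪ nextLayer le J) := by
  refine ⟨fun a ha b hba => ?_, fun a ha x hx => ?_⟩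
  · rcases mem_union.1 ha with ha | ha
    · exact mem_union_left _ (hJ.1 a ha b hba)
    · by_cases hb : b ∈ J
      · exact mem_union_left _ hb
      · exact mem_union_right _ ((mem_nextLayer.1 ha).2 b hb hba ▸ ha)
  · rw [mem_union, not_or] at hx
    rcases mem_union.1 ha with ha | ha
    · exact hJ.2 a ha x hx.1
    · exact hnext x hx.1 hx.2 a ha

lemma IsLayered.eq_of_card_eq {J K : Finset (Fin n)} (hJ : IsLayered le J) (hK : IsIdeal le K)
    (hcard : K.card = J.card) : K = J := by
  by_contra hne
  obtain ⟨y, hyK, hyJ⟩ := not_subset.1 fun h => hne (eq_of_subset_of_card_le h hcard.ge)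
  have hJK : J ⊂ K := ⟨fun a ha => hK y hyK a (hJ.2 a ha y hyJ), fun h => hyJ (h hyK)⟩
  exact (card_lt_card hJK).ne' hcard

lemma IsLayered.subset_idealCl {J X : Finset (Fin n)} (hJ : IsLayered le J) (hX : X ⊆ Jᶜ)
    (hne : X.Nonempty) : J ⊆ idealCl le X := by
  obtain ⟨x, hx⟩ := hne
  intro a ha
  simp only [idealCl, mem_filter, mem_univ, true_and]
  exact ⟨x, hx, hJ.2 a ha x (mem_compl.1 (hX hx))⟩

variable [IsPartialOrder (Fin n) le]

lemma exists_mem_maxSet_flip_le {A : Finset (Fin n)} {x : Fin n} (hx : x ∈ A) :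
    ∃ g ∈ maxSet (fun a b => le b a) A, le g x := by
  have hwf : WellFounded fun a b : Fin n => le a b ∧ a ≠ b := by
    have : IsTrans (Fin n) fun a b => le a b ∧ a ≠ b :=
      ⟨fun a b c hab hbc => ⟨trans_of le hab.1 hbc.1,
        fun hac => hbc.2 (antisymm_of le hbc.1 (hac ▸ hab.1))⟩⟩
    have : Std.Irrefl fun a b : Fin n => le a b ∧ a ≠ b := ⟨fun a h => h.2 rfl⟩
    exact Finite.wellFounded_of_trans_of_irrefl _
  obtain ⟨g, ⟨hgA, hgx⟩, hmin⟩ := hwf.has_min {y | y ∈ A ∧ le y x} ⟨x, hx, refl_of le x⟩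
  refine ⟨g, mem_filter.2 ⟨hgA, fun b hbA hbg => ?_⟩, hgx⟩
  by_contra hne
  exact hmin b ⟨hbA, trans_of le hbg hgx⟩ ⟨hbg, hne⟩

lemma exists_mem_nextLayer_le {J : Finset (Fin n)} {x : Fin n} (hx : x ∉ J) :
    ∃ g ∈ nextLayer le J, le g x :=
  exists_mem_maxSet_flip_le (mem_compl.2 hx)

/-- A layered ideal of maximal size avoiding `y` has `y` in its next layer. -/
lemma exists_isLayered_mem_not_mem
    (hnext : ∀ J, IsLayered le J → ∀ i ∉ J, i ∉ nextLayer le J → ∀ z ∈ nextLayer le J, le z i)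
    {x y : Fin n} (hxy : le x y) (hne : x ≠ y) : ∃ J, IsLayered le J ∧ x ∈ J ∧ y ∉ J := by
  obtain ⟨K, hK, hmax⟩ := exists_max_image (univ.filter fun J => IsLayered le J ∧ y ∉ J) card
    ⟨∅, mem_filter.2 ⟨mem_univ _, isLayered_empty, notMem_empty y⟩⟩
  obtain ⟨hKl, hyK⟩ := (mem_filter.1 hK).2
  have hyG : y ∈ nextLayer le K := by
    by_contra hyG
    obtain ⟨g, hg, -⟩ := exists_mem_nextLayer_le (le := le) hyK
    have hlt : K.card < (K ∪ nextLayer le K).card :=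
      card_lt_card ⟨subset_union_left, fun h => (mem_nextLayer.1 hg).1 (h (mem_union_right _ hg))⟩
    have hle := hmax _ (mem_filter.2 ⟨mem_univ _, hKl.union_nextLayer (hnext K hKl),
      by simp [hyK, hyG]⟩)
    omega
  refine ⟨K, hKl, ?_, hyK⟩
  by_contra hxK
  exact hne ((mem_nextLayer.1 hyG).2 x hxK hxy)

/-- The level of `x` is the number of layered ideals avoiding it. -/
lemma isHierarchical_of_forall_isLayered
    (hnext : ∀ J, IsLayered le J → ∀ i ∉ J, i ∉ nextLayer le J → ∀ z ∈ nextLayer le J, le z i) :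
    IsHierarchical le := by
  let avoiding (x : Fin n) := univ.filter fun J => IsLayered le J ∧ x ∉ J
  refine ⟨fun x => (avoiding x).card, fun x y => ⟨fun ⟨hxy, hne⟩ => ?_, fun hlt => ?_⟩⟩
  · obtain ⟨J, hJ, hxJ, hyJ⟩ := exists_isLayered_mem_not_mem hnext hxy hne
    refine card_lt_card ⟨fun K hK => ?_, fun h => ?_⟩
    · obtain ⟨hKl, hxK⟩ := (mem_filter.1 hK).2
      exact mem_filter.2 ⟨mem_univ _, hKl, fun hyK => hxK (hKl.1 y hyK x hxy)⟩
    · exact (mem_filter.1 (h (mem_filter.2 ⟨mem_univ _, hJ, hyJ⟩))).2.2 hxJ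
  · obtain ⟨J, hJy, hJx⟩ := not_subset.1 fun h => (card_le_card h).not_gt hlt
    obtain ⟨hJ, hyJ⟩ := (mem_filter.1 hJy).2
    have hxJ : x ∈ J := by
      by_contra hxJ
      exact hJx (mem_filter.2 ⟨mem_univ _, hJ, hxJ⟩)
    exact ⟨hJ.2 x hxJ y hyJ, fun h => hyJ (h ▸ hxJ)⟩

/-- A minimal `i` above `J` that is not above all of the next layer sits directly on that
layer, so its principal ideal adds at most `|nextLayer le J|` elements to `J`. -/
lemma exists_card_idealCl_sdiff_le {J : Finset (Fin n)} {i₀ z₀ : Fin n} (hi₀J : i₀ ∉ J)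
    (hi₀G : i₀ ∉ nextLayer le J) (hz₀ : z₀ ∈ nextLayer le J) (hzi₀ : ¬ le z₀ i₀) :
    ∃ i ∉ J, i ∉ nextLayer le J ∧ (idealCl le {i} \ J).card ≤ (nextLayer le J).card := by
  set G := nextLayer le J
  set B := Jᶜ.filter fun i => i ∉ G ∧ ∃ z ∈ G, ¬ le z i
  obtain ⟨i, hi, -⟩ := exists_mem_maxSet_flip_le (le := le) (A := B)
    (mem_filter.2 ⟨mem_compl.2 hi₀J, hi₀G, z₀, hz₀, hzi₀⟩)
  obtain ⟨hiB, himin⟩ := mem_filter.1 hi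
  obtain ⟨hiJ, hiG, z, hz, hzi⟩ := mem_filter.1 hiB
  refine ⟨i, mem_compl.1 hiJ, hiG, ?_⟩
  have hsub : idealCl le {i} \ J ⊆ insert i (G.erase z) := by
    intro b hb
    obtain ⟨hbi, hbJ⟩ : le b i ∧ b ∉ J := by simpa [idealCl] using hb
    rcases eq_or_ne b i with rfl | hbi'
    · exact mem_insert_self _ _
    refine mem_insert_of_mem (mem_erase.2 ⟨fun hbz => hzi (hbz ▸ hbi), ?_⟩)
    by_contra hbG
    exact hbi' (himin b (mem_filter.2 ⟨mem_compl.2 hbJ, hbG, z, hz,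
      fun hzb => hzi (trans_of le hzb hbi)⟩) hbi)
  calc (idealCl le {i} \ J).card ≤ (insert i (G.erase z)).card := card_le_card hsub
    _ ≤ (G.erase z).card + 1 := card_insert_le _ _
    _ = G.card := card_erase_add_one hz

lemma exists_isLayered_card_idealCl_sdiff_le (h : ¬ IsHierarchical le) :
    ∃ J, IsLayered le J ∧
      ∃ i ∉ J, i ∉ nextLayer le J ∧ (idealCl le {i} \ J).card ≤ (nextLayer le J).card := by
  have hbad := mt isHierarchical_of_forall_isLayered h
  push Not at hbad
  obtain ⟨J, hJ, i₀, hi₀J, hi₀G, z₀, hz₀, hzi₀⟩ := hbad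
  exact ⟨J, hJ, exists_card_idealCl_sdiff_le hi₀J hi₀G hz₀ hzi₀⟩

lemma idealCl_sdiff_eq_of_subset_nextLayer {J X : Finset (Fin n)} (hX : X ⊆ nextLayer le J) :
    idealCl le X \ J = X := by
  ext b
  simp only [mem_sdiff, idealCl, mem_filter, mem_univ, true_and]
  constructor
  · rintro ⟨⟨a, ha, hba⟩, hbJ⟩
    rwa [(mem_nextLayer.1 (hX ha)).2 b hbJ hba]
  · intro hb
    exact ⟨⟨b, hb, refl_of le b⟩, (mem_nextLayer.1 (hX hb)).1⟩

lemma idealCl_flip_eq_compl_iff {J : Finset (Fin n)} (hJ : IsIdeal le J) (S : Finset (Fin n)) :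
    idealCl (fun a b => le b a) S = Jᶜ ↔ nextLayer le J ⊆ S ∧ S ⊆ Jᶜ := by
  have mem_cl : ∀ b, b ∈ idealCl (fun a b => le b a) S ↔ ∃ a ∈ S, le a b := by simp [idealCl]
  constructor
  · intro h
    have hS : S ⊆ Jᶜ := fun a ha => h ▸ (mem_cl a).2 ⟨a, ha, refl_of le a⟩
    refine ⟨fun g hg => ?_, hS⟩
    obtain ⟨a, haS, hag⟩ := (mem_cl g).1 (h ▸ mem_compl.2 (mem_nextLayer.1 hg).1)
    rwa [(mem_nextLayer.1 hg).2 a (mem_compl.1 (hS haS)) hag] at haS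
  · rintro ⟨hGS, hS⟩
    ext b
    rw [mem_cl, mem_compl]
    constructor
    · rintro ⟨a, haS, hab⟩ hbJ
      exact mem_compl.1 (hS haS) (hJ b hbJ a hab)
    · intro hbJ
      obtain ⟨g, hg, hgb⟩ := exists_mem_nextLayer_le (le := le) hbJ
      exact ⟨g, hGS hg, hgb⟩

end Layers

section Codes

variable {n : ℕ} {F : Type} [Field F] [Fintype F]

lemma mem_supp {v : Fin n → F} {t : Fin n} : t ∈ supp v ↔ v t ≠ 0 := by simp [supp]

lemma supp_smul {a : F} (ha : a ≠ 0) (v : Fin n → F) : supp (a • v) = supp v := by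
  ext t
  simp [mem_supp, ha]

lemma mem_dualCode_span_singleton {u w : Fin n → F} :
    u ∈ dualCode (Submodule.span F {w}) ↔ dot u w = 0 := by
  refine ⟨fun h => h w (Submodule.mem_span_singleton_self w), fun h v hv => ?_⟩
  obtain ⟨a, rfl⟩ := Submodule.mem_span_singleton.1 hv
  change u ⬝ᵥ (a • w) = 0
  rw [dotProduct_smul]
  change a • dot u w = 0
  rw [h, smul_zero]

lemma AE_card_eq_of_equiv (le : Fin n → Fin n → Prop) {C₁ C₂ : Submodule F (Fin n → F)}
    (e : C₁ ≃ C₂)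
    (he : ∀ v, (idealCl le (supp (e v : Fin n → F))).card =
      (idealCl le (supp (v : Fin n → F))).card)
    (I : Finset (Fin n)) :
    AE le (fun A B => A.card = B.card) C₁ I = AE le (fun A B => A.card = B.card) C₂ I := by
  refine card_bij' (fun v hv => (e ⟨v, (mem_filter.1 hv).2⟩ : Fin n → F))
    (fun v hv => (e.symm ⟨v, (mem_filter.1 hv).2⟩ : Fin n → F)) (fun v hv => ?_) (fun v hv => ?_)
    (fun v hv => by simp) (fun v hv => by simp)
  · simp only [sphE, mem_filter, mem_univ, true_and] at hv ⊢
    exact ⟨(he _).trans hv.1, (e _).2⟩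
  · simp only [sphE, mem_filter, mem_univ, true_and] at hv ⊢
    refine ⟨?_, (e.symm _).2⟩
    rw [← hv.1, ← he, Equiv.apply_symm_apply]

lemma AE_span_singleton_eq (le : Fin n → Fin n → Prop) {w₁ w₂ : Fin n → F} (h₁ : w₁ ≠ 0)
    (h₂ : w₂ ≠ 0) (hcl : (idealCl le (supp w₁)).card = (idealCl le (supp w₂)).card)
    (I : Finset (Fin n)) :
    AE le (fun A B => A.card = B.card) (Submodule.span F {w₁}) I =
      AE le (fun A B => A.card = B.card) (Submodule.span F {w₂}) I := by
  let e₁ := LinearEquiv.toSpanNonzeroSingleton F _ w₁ h₁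
  let e₂ := LinearEquiv.toSpanNonzeroSingleton F _ w₂ h₂
  refine AE_card_eq_of_equiv le (e₁.symm.trans e₂).toEquiv (fun v => ?_) I
  obtain ⟨a, rfl⟩ := e₁.surjective v
  change (idealCl le (supp (e₂ (e₁.symm (e₁ a)) : Fin n → F))).card =
    (idealCl le (supp (e₁ a : Fin n → F))).card
  rw [LinearEquiv.symm_apply_apply]
  simp only [e₁, e₂, LinearEquiv.toSpanNonzeroSingleton_apply]
  rcases eq_or_ne a 0 with rfl | ha
  · simp only [zero_smul]
  · rw [supp_smul ha, supp_smul ha, hcl]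

variable (F) in
def suppBetween (G U : Finset (Fin n)) : Finset (Fin n → F) :=
  univ.filter fun u => G ⊆ supp u ∧ supp u ⊆ U

lemma card_suppBetween {G U : Finset (Fin n)} (hGU : G ⊆ U) :
    (suppBetween F G U).card =
      (Fintype.card F - 1) ^ G.card * Fintype.card F ^ (U \ G).card := by
  have hpi : suppBetween F G U =
      Fintype.piFinset fun t => if t ∈ G then univ.erase 0 else if t ∈ U then univ else {0} := by
    ext u
    simp only [suppBetween, mem_filter, mem_univ, true_and, Fintype.mem_piFinset, subset_iff,
      mem_supp]
    constructor
    · rintro ⟨hG, hU⟩ t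
      split_ifs with htG htU
      · simpa using hG htG
      · exact mem_univ _
      · simpa using not_imp_comm.1 (hU (x := t)) htU
    · intro h
      refine ⟨fun t ht => by simpa [ht] using h t, fun t ht => ?_⟩
      by_contra htU
      have := h t
      rw [if_neg (fun htG => htU (hGU htG)), if_neg htU, mem_singleton] at this
      exact ht this
  rw [hpi, Fintype.card_piFinset]
  calc _ = ∏ t, (if t ∈ G then Fintype.card F - 1 else 1) *
        (if t ∈ U \ G then Fintype.card F else 1) := by
        refine prod_congr rfl fun t _ => ?_
        by_cases htG : t ∈ G <;> by_cases htU : t ∈ U <;> simp [htG, htU, card_univ]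
    _ = _ := by rw [prod_mul_distrib, Fintype.prod_ite_mem, Fintype.prod_ite_mem, prod_const,
        prod_const]

lemma card_filter_dot_single {G U : Finset (Fin n)} {i : Fin n} (hGU : G ⊆ U) (hi : i ∈ U \ G) :
    ((suppBetween F G U).filter fun u => dot u (Pi.single i 1) = 0).card =
      (Fintype.card F - 1) ^ G.card * Fintype.card F ^ ((U \ G).card - 1) := by
  have hfilter : ((suppBetween F G U).filter fun u => dot u (Pi.single i 1) = 0) =
      suppBetween F G (U.erase i) := by
    ext u
    have hdot : dot u (Pi.single i 1) = u i := by
      change u ⬝ᵥ Pi.single i 1 = u i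
      rw [dotProduct_single, mul_one]
    simp only [suppBetween, mem_filter, mem_univ, true_and, hdot, subset_erase, mem_supp, ne_eq,
      not_not, and_assoc]
  have hGi : G ⊆ U.erase i := subset_erase.2 ⟨hGU, (mem_sdiff.1 hi).2⟩
  rw [hfilter, card_suppBetween hGi, erase_sdiff_comm, card_erase_of_mem hi]

lemma card_pow_dvd_card_of_forall_eq_off {ι α : Type*} [Fintype ι] [Fintype α] (D : Finset ι)
    (s : Finset (ι → α)) (hs : ∀ u ∈ s, ∀ v : ι → α, (∀ t ∉ D, v t = u t) → v ∈ s) :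
    Fintype.card α ^ D.card ∣ s.card := by
  classical
  let restrict (u : ι → α) (t : {t // t ∉ D}) : α := u t
  rw [card_eq_sum_card_fiberwise (f := restrict) (t := s.image restrict)
    fun u hu => mem_image_of_mem restrict hu]
  refine dvd_sum fun a ha => ?_
  obtain ⟨u, hu, rfl⟩ := mem_image.1 ha
  have hfiber : s.filter (fun v => restrict v = restrict u) =
      Fintype.piFinset fun t => if t ∈ D then univ else {u t} := by
    ext v
    simp only [mem_filter, Fintype.mem_piFinset, funext_iff, Subtype.forall, restrict]
    constructor
    · rintro ⟨-, hv⟩ t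
      split_ifs with ht
      · exact mem_univ _
      · exact mem_singleton.2 (hv t ht)
    · intro hv
      have hoff : ∀ t ∉ D, v t = u t := fun t ht => by simpa [ht] using hv t
      exact ⟨hs u hu v hoff, hoff⟩
  rw [hfiber, Fintype.card_piFinset]
  simp only [apply_ite card, card_univ, card_singleton, Fintype.prod_ite_mem, prod_const,
    dvd_refl]

lemma pow_dvd_card_filter_dot {G U : Finset (Fin n)} {w : Fin n → F}
    (hw : ∀ t ∈ U \ G, w t = 0) :
    Fintype.card F ^ (U \ G).card ∣ ((suppBetween F G U).filter fun u => dot u w = 0).card := by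
  refine card_pow_dvd_card_of_forall_eq_off _ _ fun u hu v hvu => ?_
  simp only [suppBetween, mem_filter, mem_univ, true_and, subset_iff, mem_supp] at hu ⊢
  obtain ⟨⟨hG, hU⟩, hdot⟩ := hu
  refine ⟨⟨fun t ht => ?_, fun t ht => ?_⟩, ?_⟩
  · rw [hvu t fun h => (mem_sdiff.1 h).2 ht]
    exact hG ht
  · by_cases htD : t ∈ U \ G
    · exact (mem_sdiff.1 htD).1
    · exact hU (hvu t htD ▸ ht)
  · rw [← hdot]
    refine sum_congr rfl fun t _ => ?_
    by_cases htD : t ∈ U \ G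
    · rw [hw t htD, mul_zero, mul_zero]
    · rw [hvu t htD]

lemma IsLayered.AED_eq {le : Fin n → Fin n → Prop} [IsPartialOrder (Fin n) le]
    {J : Finset (Fin n)} (hJ : IsLayered le J) (D : Submodule F (Fin n → F)) :
    AED le (fun A B => A.card = B.card) D J =
      ((suppBetween F (nextLayer le J) Jᶜ).filter (· ∈ D)).card := by
  unfold AED
  congr 1
  ext v
  simp only [sphED, suppBetween, mem_filter, mem_univ, true_and]
  rw [← idealCl_flip_eq_compl_iff hJ.1]
  constructor
  · rintro ⟨⟨K, hK, hKJ, hcl⟩, hv⟩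
    rw [hJ.eq_of_card_eq hK hKJ] at hcl
    exact ⟨hcl, hv⟩
  · rintro ⟨hcl, hv⟩
    exact ⟨⟨J, hJ.1, rfl, hcl⟩, hv⟩

end Codes

lemma not_pow_dvd_sub_one_pow_mul_pow_pred {q d : ℕ} (hq : 2 ≤ q) (hd : 1 ≤ d) (g : ℕ) :
    ¬ q ^ d ∣ (q - 1) ^ g * q ^ (d - 1) := by
  intro h
  have h' : q ^ (d - 1) * q ∣ q ^ (d - 1) * (q - 1) ^ g := by
    rwa [← pow_succ, Nat.sub_add_cancel hd, mul_comm]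
  have hdvd : q ∣ (q - 1) ^ g := Nat.dvd_of_mul_dvd_mul_left (by positivity) h'
  have hcop : Nat.Coprime q ((q - 1) ^ g) :=
    ((Nat.coprime_self_sub_right (by omega)).2 (Nat.coprime_one_right q)).pow_right g
  have := Nat.Coprime.eq_one_of_dvd hcop hdvd
  omega

theorem stmt_15_general {n : ℕ} (le : Fin n → Fin n → Prop)
    [IsPartialOrder (Fin n) le]
    (F : Type) [Field F] [Fintype F]
    (hMW : IsMacWilliamsType F le (fun A B => A.card = B.card)) :
    IsHierarchical le := by
  by_contra hnh
  obtain ⟨J, hJ, i, hiJ, hiG, hcard⟩ := exists_isLayered_card_idealCl_sdiff_le hnh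
  set G := nextLayer le J
  have hGJ : G ⊆ Jᶜ := fun g hg => mem_compl.2 (mem_nextLayer.1 hg).1
  have hiD : i ∈ Jᶜ \ G := mem_sdiff.2 ⟨mem_compl.2 hiJ, hiG⟩
  obtain ⟨S, hSG, hS⟩ := exists_subset_card_eq hcard
  obtain ⟨x, hx⟩ : S.Nonempty := card_pos.1 <| hS ▸ card_pos.2
    ⟨i, mem_sdiff.2 ⟨by simpa [idealCl] using refl_of le i, hiJ⟩⟩
  let w₁ : Fin n → F := Pi.single i 1
  let w₂ : Fin n → F := fun t => if t ∈ S then 1 else 0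
  have hw₁ : supp w₁ = {i} := by ext t; by_cases ht : t = i <;> simp [mem_supp, w₁, ht]
  have hw₂ : supp w₂ = S := by ext t; simp [mem_supp, w₂]
  have hJi : J ⊆ idealCl le {i} := hJ.subset_idealCl (by simpa using hiJ) (singleton_nonempty i)
  have hJS : J ⊆ idealCl le S := hJ.subset_idealCl (hSG.trans hGJ) ⟨x, hx⟩
  have hcl : (idealCl le (supp w₁)).card = (idealCl le (supp w₂)).card := by
    rw [hw₁, hw₂, ← card_sdiff_add_card_eq_card hJi, ← card_sdiff_add_card_eq_card hJS,
      idealCl_sdiff_eq_of_subset_nextLayer hSG, hS]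
  have hne₁ : w₁ ≠ 0 := Pi.single_ne_zero_iff.2 one_ne_zero
  have hne₂ : w₂ ≠ 0 := fun h => by simpa [w₂, hx] using congr_fun h x
  have hAED := hMW _ _ (fun I _ => AE_span_singleton_eq le hne₁ hne₂ hcl I) J hJ.1
  simp only [hJ.AED_eq, mem_dualCode_span_singleton] at hAED
  rw [card_filter_dot_single hGJ hiD] at hAED
  have hq : 2 ≤ Fintype.card F := Fintype.one_lt_card
  refine not_pow_dvd_sub_one_pow_mul_pow_pred hq (card_pos.2 ⟨i, hiD⟩) G.card ?_
  rw [hAED]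
  exact pow_dvd_card_filter_dot fun t ht => if_neg fun htS => (mem_sdiff.1 ht).2 (hSG htS)

/-- Theorem 4.1(ii), (b) ⇒ (a): if `E_C` is of MacWilliams type then `P` is hierarchical. -/
theorem stmt_15 {n : ℕ} (hn : 0 < n) (le : Fin n → Fin n → Prop)
    [IsPartialOrder (Fin n) le]
    (F : Type) [Field F] [Fintype F]
    (hMW : IsMacWilliamsType F le (fun A B => A.card = B.card)) :
    IsHierarchical le :=
  stmt_15_general le F hMW
end
end

section
/- Let P be a poset on [n]. Then P is a hierarchical poset if and only if for all order ideals I, J of P: |I| = |J| if and only if there exists an automorphism σ ∈ Aut(P) with σ(I) = J. (Theorem 4.1(ii), equivalence (a) ⇔ (c): the relations E_C and E_{Aut(P)} coincide exactly when P is hierarchical.) -/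
open scoped BigOperators
open Finset

noncomputable section
open scoped Classical

section MyAux
variable {n : ℕ} (le : Fin n → Fin n → Prop) [IsPartialOrder (Fin n) le]

lemma exists_maximal_mem :
    ∀ Z : Finset (Fin n), Z.Nonempty → ∃ z ∈ Z, ∀ x ∈ Z, le z x → x = z := by
  intro Z
  induction Z using Finset.strongInduction with
  | _ Z ih =>
    intro hZ
    obtain ⟨z0, hz0⟩ := hZ
    by_cases h : ∀ x ∈ Z, le z0 x → x = z0
    · exact ⟨z0, hz0, h⟩
    · push_neg at h
      obtain ⟨x, hxZ, hle, hne⟩ := h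
      set S := Z.filter (fun y => le x y) with hS
      have hxS : x ∈ S := Finset.mem_filter.mpr ⟨hxZ, refl_of le x⟩
      have hz0S : z0 ∉ S := by
        intro hmem
        exact hne (antisymm_of le (Finset.mem_filter.mp hmem).2 hle)
      have hss : S ⊂ Z := Finset.ssubset_iff_subset_ne.mpr
        ⟨Finset.filter_subset _ _, fun h => hz0S (h ▸ hz0)⟩
      obtain ⟨z, hzS, hzmax⟩ := ih S hss ⟨x, hxS⟩
      refine ⟨z, (Finset.mem_filter.mp hzS).1, fun y hyZ hzy => ?_⟩
      have hxz : le x z := (Finset.mem_filter.mp hzS).2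
      exact hzmax y (Finset.mem_filter.mpr ⟨hyZ, trans_of le hxz hzy⟩) hzy

lemma exists_subideal (B : Finset (Fin n)) (d : ℕ) :
    ∀ Z : Finset (Fin n), IsIdeal le Z → B.card ≤ d → d ≤ (B ∪ Z).card →
    ∃ D, IsIdeal le D ∧ D ⊆ Z ∧ (B ∪ D).card = d := by
  intro Z
  induction Z using Finset.strongInduction with
  | _ Z ih =>
    intro hZ h1 h2
    by_cases heq : (B ∪ Z).card = d
    · exact ⟨Z, hZ, Finset.Subset.refl Z, heq⟩
    · have hlt : d < (B ∪ Z).card := lt_of_le_of_ne h2 (Ne.symm heq)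
      have hZne : Z.Nonempty := by
        rcases Finset.eq_empty_or_nonempty Z with rfl | h
        · simp only [Finset.union_empty] at hlt; omega
        · exact h
      obtain ⟨z, hzZ, hzmax⟩ := exists_maximal_mem le Z hZne
      have hZ' : IsIdeal le (Z.erase z) := by
        intro a ha b hba
        have haZ : a ∈ Z := Finset.mem_of_mem_erase ha
        refine Finset.mem_erase.mpr ⟨?_, hZ a haZ b hba⟩
        rintro rfl
        exact (Finset.mem_erase.mp ha).1 (hzmax a haZ hba)
      have hsub : Z.erase z ⊂ Z := Finset.erase_ssubset hzZ
      have hcard : d ≤ (B ∪ Z.erase z).card := by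
        have hsub2 : B ∪ Z ⊆ insert z (B ∪ Z.erase z) := by
          intro x hx
          rcases Finset.mem_union.mp hx with h | h
          · exact Finset.mem_insert_of_mem (Finset.mem_union_left _ h)
          · by_cases hxz : x = z
            · simp [hxz]
            · exact Finset.mem_insert_of_mem
                (Finset.mem_union_right _ (Finset.mem_erase.mpr ⟨hxz, h⟩))
        have h3 := Finset.card_le_card hsub2
        have h4 := Finset.card_insert_le z (B ∪ Z.erase z)
        omega
      obtain ⟨D, hD1, hD2, hD3⟩ := ih (Z.erase z) hsub hZ' h1 hcard
      exact ⟨D, hD1, hD2.trans (Finset.erase_subset z Z), hD3⟩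


end MyAux

lemma exists_perm_of_fiber_card {α β : Type*} [Fintype α] [DecidableEq β] (g h : α → β)
    (hc : ∀ b, (univ.filter fun x => g x = b).card = (univ.filter fun x => h x = b).card) :
    ∃ σ : Equiv.Perm α, ∀ x, h (σ x) = g x := by
  have hcard : ∀ b, Fintype.card {x // g x = b} = Fintype.card {x // h x = b} := by
    intro b
    rw [Fintype.card_subtype, Fintype.card_subtype]
    convert hc b using 2
  let efib : ∀ b, {x // g x = b} ≃ {x // h x = b} := fun b =>
    Fintype.equivOfCardEq (hcard b)
  let σ : Equiv.Perm α := (Equiv.sigmaFiberEquiv g).symm.trans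
    ((Equiv.sigmaCongrRight efib).trans (Equiv.sigmaFiberEquiv h))
  refine ⟨σ, fun x => ?_⟩
  have hx : σ x = ((efib (g x)) ⟨x, rfl⟩ : {y // h y = g x}).val := rfl
  rw [hx]
  exact ((efib (g x)) ⟨x, rfl⟩).2

lemma hier_forward {n : ℕ} (le : Fin n → Fin n → Prop) [IsPartialOrder (Fin n) le]
    (l : Fin n → ℕ) (hl : ∀ i j, (le i j ∧ i ≠ j) ↔ l i < l j)
    (I J : Finset (Fin n)) (hI : IsIdeal le I) (hJ : IsIdeal le J) (hc : I.card = J.card) :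
    ∃ σ : Equiv.Perm (Fin n), IsAut le σ ∧ I.image σ = J := by
  have le_iff : ∀ a b, le a b ↔ a = b ∨ l a < l b := by
    intro a b
    constructor
    · intro h
      by_cases hab : a = b
      · exact Or.inl hab
      · exact Or.inr ((hl a b).mp ⟨h, hab⟩)
    · rintro (rfl | h)
      · exact refl_of le a
      · exact ((hl a b).mpr h).1
  -- step 1'
  have key : ∀ v, (I.filter fun x => l x < v).card = (J.filter fun x => l x < v).card := by
    intro v
    have hmix : ∀ (K L : Finset (Fin n)), IsIdeal le K → (∃ x ∈ K, v ≤ l x) →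
        (∀ y ∈ L, l y < v) → L.card < K.card := by
      rintro K L hK ⟨x, hxK, hxv⟩ hL
      have h1 : univ.filter (fun y => l y < v) ⊆ K := by
        intro y hy
        simp only [Finset.mem_filter, Finset.mem_univ, true_and] at hy
        exact hK x hxK y ((hl y x).mpr (lt_of_lt_of_le hy hxv)).1
      have h2 : L ⊆ univ.filter (fun y => l y < v) := by
        intro y hy
        simp only [Finset.mem_filter, Finset.mem_univ, true_and]
        exact hL y hy
      have h3 : insert x (univ.filter fun y => l y < v) ⊆ K :=
        Finset.insert_subset hxK h1
      have h4 := Finset.card_le_card h3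
      have h5 : x ∉ univ.filter fun y => l y < v := by simp; omega
      rw [Finset.card_insert_of_notMem h5] at h4
      have h6 := Finset.card_le_card h2
      omega
    by_cases hIv : ∃ x ∈ I, v ≤ l x
    · by_cases hJv : ∃ x ∈ J, v ≤ l x
      · have hfull : ∀ K : Finset (Fin n), IsIdeal le K → (∃ x ∈ K, v ≤ l x) →
            K.filter (fun x => l x < v) = univ.filter (fun x => l x < v) := by
          rintro K hK ⟨x, hxK, hxv⟩
          apply Finset.Subset.antisymm
          · intro y hy
            simp only [Finset.mem_filter, Finset.mem_univ, true_and] at hy ⊢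
            exact hy.2
          · intro y hy
            simp only [Finset.mem_filter, Finset.mem_univ, true_and] at hy ⊢
            exact ⟨hK x hxK y ((hl y x).mpr (lt_of_lt_of_le hy hxv)).1, hy⟩
        rw [hfull I hI hIv, hfull J hJ hJv]
      · exfalso
        push_neg at hJv
        have := hmix I J hI hIv (fun y hy => hJv y hy)
        omega
    · by_cases hJv : ∃ x ∈ J, v ≤ l x
      · exfalso
        push_neg at hIv
        have := hmix J I hJ hJv (fun y hy => hIv y hy)
        omega
      · push_neg at hIv; push_neg at hJv
        rw [Finset.filter_true_of_mem (fun x hx => hIv x hx),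
          Finset.filter_true_of_mem (fun x hx => hJv x hx)]
        exact hc
  -- step 2
  have key2 : ∀ v, (I.filter fun x => l x = v).card = (J.filter fun x => l x = v).card := by
    have hsplit : ∀ K : Finset (Fin n), ∀ v, (K.filter fun x => l x < v + 1).card
        = (K.filter fun x => l x = v).card + (K.filter fun x => l x < v).card := by
      intro K v
      rw [← Finset.card_union_of_disjoint (by
        simp only [Finset.disjoint_left, Finset.mem_filter]
        rintro a ⟨-, h1⟩ ⟨-, h2⟩; omega)]
      congr 1
      ext x
      simp only [Finset.mem_filter, Finset.mem_union]
      by_cases hx : x ∈ K <;> simp [hx] <;> omega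
    intro v
    have h1 := hsplit I v
    have h2 := hsplit J v
    have h3 := key v
    have h4 := key (v + 1)
    omega
  -- fibers
  have fib : ∀ b : ℕ × Bool, (univ.filter fun x => (l x, decide (x ∈ I)) = b).card
      = (univ.filter fun x => (l x, decide (x ∈ J)) = b).card := by
    rintro ⟨v, bb⟩
    cases bb
    · have e1 : (univ.filter fun x => (l x, decide (x ∈ I)) = (v, false))
          = (univ.filter fun x => l x = v) \ (I.filter fun x => l x = v) := by
        ext x
        simp only [Finset.mem_filter, Finset.mem_univ, true_and, Finset.mem_sdiff,
          Prod.mk.injEq, decide_eq_false_iff_not]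
        tauto
      have e2 : (univ.filter fun x => (l x, decide (x ∈ J)) = (v, false))
          = (univ.filter fun x => l x = v) \ (J.filter fun x => l x = v) := by
        ext x
        simp only [Finset.mem_filter, Finset.mem_univ, true_and, Finset.mem_sdiff,
          Prod.mk.injEq, decide_eq_false_iff_not]
        tauto
      rw [e1, e2, Finset.card_sdiff_of_subset (Finset.filter_subset_filter _ (Finset.subset_univ I)),
        Finset.card_sdiff_of_subset (Finset.filter_subset_filter _ (Finset.subset_univ J)), key2 v]
    · have e1 : (univ.filter fun x => (l x, decide (x ∈ I)) = (v, true))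
          = I.filter fun x => l x = v := by
        ext x
        simp only [Finset.mem_filter, Finset.mem_univ, true_and, Prod.mk.injEq,
          decide_eq_true_eq]
        tauto
      have e2 : (univ.filter fun x => (l x, decide (x ∈ J)) = (v, true))
          = J.filter fun x => l x = v := by
        ext x
        simp only [Finset.mem_filter, Finset.mem_univ, true_and, Prod.mk.injEq,
          decide_eq_true_eq]
        tauto
      rw [e1, e2]; exact key2 v
  obtain ⟨σ, hσ⟩ := exists_perm_of_fiber_card (fun x => (l x, decide (x ∈ I)))
    (fun x => (l x, decide (x ∈ J))) fib
  have hσ' : ∀ x, l (σ x) = l x ∧ (σ x ∈ J ↔ x ∈ I) := by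
    intro x
    have h := hσ x
    rw [Prod.mk.injEq] at h
    exact ⟨h.1, decide_eq_decide.mp h.2⟩
  refine ⟨σ, ?_, ?_⟩
  · intro x y
    rw [le_iff, le_iff, (hσ' x).1, (hσ' y).1, EmbeddingLike.apply_eq_iff_eq]
  · apply Finset.eq_of_subset_of_card_le
    · intro y hy
      obtain ⟨x, hx, rfl⟩ := Finset.mem_image.mp hy
      exact ((hσ' x).2).mpr hx
    · rw [Finset.card_image_of_injective _ σ.injective, hc]

section MyAux2
variable {n : ℕ} (le : Fin n → Fin n → Prop) [IsPartialOrder (Fin n) le]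

def princ (i : Fin n) : Finset (Fin n) := univ.filter fun b => le b i

lemma mem_princ {i b : Fin n} : b ∈ princ le i ↔ le b i := by
  simp [princ]

lemma princ_isIdeal (i : Fin n) : IsIdeal le (princ le i) := by
  intro a ha b hba
  exact (mem_princ le).mpr (trans_of le hba ((mem_princ le).mp ha))

lemma princ_card_lt {i j : Fin n} (h : le i j) (hne : i ≠ j) :
    (princ le i).card < (princ le j).card := by
  apply Finset.card_lt_card
  rw [Finset.ssubset_iff_subset_ne]
  constructor
  · intro b hb
    exact (mem_princ le).mpr (trans_of le ((mem_princ le).mp hb) h)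
  · intro hEq
    have hj : j ∈ princ le j := (mem_princ le).mpr (refl_of le j)
    rw [← hEq] at hj
    exact hne (antisymm_of le h ((mem_princ le).mp hj))

lemma card_princ_lt_aux
    (H : ∀ I J : Finset (Fin n), IsIdeal le I → IsIdeal le J →
        (I.card = J.card ↔ ∃ σ : Equiv.Perm (Fin n), IsAut le σ ∧ I.image σ = J))
    (i j : Fin n) (hij : ¬ le i j) (hji : ¬ le j i) :
    ¬ (princ le i).card < (princ le j).card := by
  intro hlt
  have hjj : j ∈ princ le j := (mem_princ le).mpr (refl_of le j)
  have hii : i ∈ princ le i := (mem_princ le).mpr (refl_of le i)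
  have hiPj : i ∉ princ le j := fun h => hij ((mem_princ le).mp h)
  -- Z := princ j minus its top
  set Z := (princ le j).erase j with hZdef
  have hZideal : IsIdeal le Z := by
    intro a ha b hba
    have haj : le a j := (mem_princ le).mp (Finset.mem_of_mem_erase ha)
    refine Finset.mem_erase.mpr ⟨?_, (mem_princ le).mpr (trans_of le hba haj)⟩
    rintro rfl
    exact (Finset.mem_erase.mp ha).1 (antisymm_of le haj hba)
  have hZcard : Z.card = (princ le j).card - 1 := Finset.card_erase_of_mem hjj
  have hiZ : i ∉ Z := fun h => hiPj (Finset.mem_of_mem_erase h)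
  have hub : (princ le j).card ≤ (princ le i ∪ Z).card := by
    have hsub : insert i Z ⊆ princ le i ∪ Z := by
      intro x hx
      rcases Finset.mem_insert.mp hx with rfl | h
      · exact Finset.mem_union_left _ hii
      · exact Finset.mem_union_right _ h
    have h1 := Finset.card_le_card hsub
    rw [Finset.card_insert_of_notMem hiZ] at h1
    have : 1 ≤ (princ le j).card := Finset.card_pos.mpr ⟨j, hjj⟩
    omega
  obtain ⟨D, hDideal, hDZ, hDcard⟩ := exists_subideal le (princ le i) ((princ le j).card)
    Z hZideal (le_of_lt hlt) hub
  set B := princ le i ∪ D with hBdef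
  have hBideal : IsIdeal le B := by
    intro a ha b hba
    rcases Finset.mem_union.mp ha with h | h
    · exact Finset.mem_union_left _ (princ_isIdeal le i a h b hba)
    · exact Finset.mem_union_right _ (hDideal a h b hba)
  obtain ⟨σ, hAut, himg⟩ := (H (princ le j) B (princ_isIdeal le j) hBideal).mp hDcard.symm
  have hiB : i ∈ B := Finset.mem_union_left _ hii
  -- i is maximal in B
  have himax : ∀ x ∈ B, le i x → x = i := by
    intro x hx hix
    rcases Finset.mem_union.mp hx with h | h
    · exact antisymm_of le ((mem_princ le).mp h) hix
    · exact absurd (trans_of le hix ((mem_princ le).mp (Finset.mem_of_mem_erase (hDZ h)))) hij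
  -- every maximal element of B equals σ j
  have huniq : ∀ x ∈ B, (∀ y ∈ B, le x y → y = x) → x = σ j := by
    intro x hxB hxmax
    rw [← himg] at hxB
    obtain ⟨y, hyA, rfl⟩ := Finset.mem_image.mp hxB
    have hyj : le y j := (mem_princ le).mp hyA
    have hσjB : σ j ∈ B := himg ▸ Finset.mem_image_of_mem σ hjj
    have := hxmax (σ j) hσjB ((hAut y j).mp hyj)
    rw [this]
  have hiσj : i = σ j := huniq i hiB himax
  -- princ i = image of princ j
  have hring : (princ le j).image σ = princ le i := by
    ext x
    constructor
    · intro hx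
      obtain ⟨y, hy, rfl⟩ := Finset.mem_image.mp hx
      exact (mem_princ le).mpr (hiσj ▸ (hAut y j).mp ((mem_princ le).mp hy))
    · intro hx
      refine Finset.mem_image.mpr ⟨σ.symm x, ?_, by simp⟩
      have h1 : le x (σ j) := hiσj ▸ (mem_princ le).mp hx
      have h2 : le (σ (σ.symm x)) (σ j) := by simpa using h1
      exact (mem_princ le).mpr ((hAut (σ.symm x) j).mpr h2)
  have : (princ le j).card = (princ le i).card := by
    rw [← hring, Finset.card_image_of_injective _ σ.injective]
  omega


end MyAux2

/-- Theorem 4.1(ii), (a) ⇔ (c): `P` is hierarchical iff `E_C = E_{Aut(P)}`. -/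
theorem stmt_16 {n : ℕ} (hn : 0 < n) (le : Fin n → Fin n → Prop)
    [IsPartialOrder (Fin n) le] :
    IsHierarchical le ↔
      ∀ I J : Finset (Fin n), IsIdeal le I → IsIdeal le J →
        (I.card = J.card ↔ ∃ σ : Equiv.Perm (Fin n), IsAut le σ ∧ I.image σ = J) := by
  constructor
  · rintro ⟨l, hl⟩ I J hI hJ
    constructor
    · exact fun hc => hier_forward le l hl I J hI hJ hc
    · rintro ⟨σ, hσ, rfl⟩
      exact (Finset.card_image_of_injective I σ.injective).symm
  · intro H
    refine ⟨fun i => (princ le i).card, fun i j => ?_⟩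
    show (le i j ∧ i ≠ j) ↔ (princ le i).card < (princ le j).card
    constructor
    · rintro ⟨hij, hne⟩
      exact princ_card_lt le hij hne
    · intro h
      have hne : i ≠ j := fun e => by rw [e] at h; exact lt_irrefl _ h
      by_cases h1 : le i j
      · exact ⟨h1, hne⟩
      · by_cases h2 : le j i
        · have := princ_card_lt le h2 (Ne.symm hne)
          omega
        · exact absurd h (card_princ_lt_aux le H i j h1 h2)

end
end

section
/- Let P be a complement isomorphism poset on [n] and 𝔽_q a finite field. Then the equivalence relation E_S on I(P), defined by (I,J) ∈ E_S iff I and J are order-isomorphic with the induced orders, is a MacWilliams-type equivalence relation: for all linear P-codes C₁, C₂ ⊆ 𝔽_q^n, if A_{Ī,E_S}(C₁) = A_{Ī,E_S}(C₂) for all order ideals I, then A_{J̄^c,E_S*}(C₁^⊥) = A_{J̄^c,E_S*}(C₂^⊥) for all order ideals J. (Theorem 4.1(iii), (a) ⇒ (b).) -/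
open scoped BigOperators
open Finset

noncomputable section
open scoped Classical

/-!
Write `A_M(C)` for the number of codewords of `C` whose support generates the ideal `M`, and
`N_K(D)` for the number of words of `D` supported in `Kᶜ`. The MacWilliams identity for supports
gives `|C| · N_K(C^⊥) = q^(n-|K|) · ∑_{M ⊆ K} A_M(C)`, so summing over the ideals `K ≅ J`
yields `q^(n-|J|) · ∑_M A_M(C) · #{K ⊇ M : K ≅ J}`. In a complement isomorphism poset this
coefficient depends only on the isomorphism class of `M`: the ideals `K ⊇ M` are the complements
of the up-sets inside `Mᶜ`, and `Mᶜ ≅ M'ᶜ` whenever `M ≅ M'`. Hence the class sums of `N(C^⊥)`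
are determined by those of `A(C)`. Finally `N_K` is the sum of the dual sphere counts over the
ideals `L ⊇ K`, a transform that is unitriangular on isomorphism classes ordered by size, so it
can be inverted class by class.
-/

theorem sum_mul_eq_of_sum_classes_eq {α R : Type*} [NonUnitalNonAssocSemiring R]
    {r : α → α → Prop} (hr : Equivalence r) {t : Finset α} {w f g : α → R}
    (hw : ∀ a ∈ t, ∀ b ∈ t, r a b → w a = w b)
    (hfg : ∀ a ∈ t, ∑ b ∈ t with r b a, f b = ∑ b ∈ t with r b a, g b) :
    ∑ a ∈ t, w a * f a = ∑ a ∈ t, w a * g a := by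
  let s : Setoid α := ⟨r, hr⟩
  have hfiber : ∀ h : α → R, ∑ a ∈ t, w a * h a =
      ∑ c ∈ t.image (Quotient.mk s), ∑ a ∈ t with Quotient.mk s a = c, w a * h a :=
    fun h => (sum_fiberwise_of_maps_to (fun a ha => mem_image_of_mem _ ha) _).symm
  rw [hfiber f, hfiber g]
  refine sum_congr rfl fun c hc => ?_
  obtain ⟨a, ha, rfl⟩ := mem_image.1 hc
  have hclass : ∀ h : α → R, ∑ b ∈ t with Quotient.mk s b = Quotient.mk s a, w b * h b =
      w a * ∑ b ∈ t with r b a, h b := by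
    intro h
    rw [mul_sum]
    refine sum_congr (filter_congr fun b _ => Quotient.eq) fun b hb => ?_
    rw [mem_filter] at hb
    rw [hw b hb.1 a ha hb.2]
  rw [hclass, hclass, hfg a ha]

section OrdIso

variable {n : ℕ} {r : Fin n → Fin n → Prop}

theorem ordIso_equivalence : Equivalence (OrdIso r) where
  refl _ := ⟨Equiv.refl _, fun _ _ => Iff.rfl⟩
  symm := fun ⟨e, he⟩ => ⟨e.symm, fun a b => by simpa using (he (e.symm a) (e.symm b)).symm⟩
  trans := fun ⟨e₁, h₁⟩ ⟨e₂, h₂⟩ => ⟨e₁.trans e₂, fun a b => (h₁ a b).trans (h₂ _ _)⟩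

theorem OrdIso.card_eq {A B : Finset (Fin n)} (h : OrdIso r A B) : #A = #B := by
  obtain ⟨e, -⟩ := h
  simpa using Fintype.card_congr e

theorem ordIso_swap_iff {A B : Finset (Fin n)} : OrdIso (fun a b => r b a) A B ↔ OrdIso r A B :=
  ⟨fun ⟨e, he⟩ => ⟨e, fun a b => he b a⟩, fun ⟨e, he⟩ => ⟨e, fun a b => he b a⟩⟩

theorem OrdIso.exists_perm {A B : Finset (Fin n)} (h : OrdIso r A B) :
    ∃ σ : Equiv.Perm (Fin n), A.map σ.toEmbedding = B ∧
      ∀ a ∈ A, ∀ b ∈ A, r a b ↔ r (σ a) (σ b) := by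
  obtain ⟨e, he⟩ := h
  refine ⟨e.extendSubtype, eq_of_subset_of_card_le (fun y hy => ?_) ?_, fun a ha b hb => ?_⟩
  · obtain ⟨x, hx, rfl⟩ := mem_map.1 hy
    exact e.extendSubtype_mem x hx
  · rw [card_map, OrdIso.card_eq ⟨e, he⟩]
  · rw [e.extendSubtype_apply_of_mem a ha, e.extendSubtype_apply_of_mem b hb]
    exact he ⟨a, ha⟩ ⟨b, hb⟩

theorem ordIso_map {σ : Equiv.Perm (Fin n)} {K : Finset (Fin n)}
    (hσ : ∀ a ∈ K, ∀ b ∈ K, r a b ↔ r (σ a) (σ b)) : OrdIso r K (K.map σ.toEmbedding) :=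
  ⟨σ.subtypeEquiv fun a => by simp, fun a b => hσ a a.2 b b.2⟩

end OrdIso

section Ideals

variable {n : ℕ} {r : Fin n → Fin n → Prop}

def ideals (r : Fin n → Fin n → Prop) : Finset (Finset (Fin n)) := {K | IsIdeal r K}

theorem mem_ideals {K : Finset (Fin n)} : K ∈ ideals r ↔ IsIdeal r K := by
  simp [ideals]

theorem isIdeal_univ : IsIdeal r univ := fun _ _ _ _ => mem_univ _

theorem isIdeal_compl_iff {K : Finset (Fin n)} : IsIdeal r Kᶜ ↔ IsIdeal (fun a b => r b a) K := by
  simp only [IsIdeal, mem_compl]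
  exact ⟨fun h a ha b hab => by_contra fun hb => h b hb a hab ha,
    fun h a ha b hba hb => ha (h b hb a hba)⟩

theorem isIdeal_idealCl [IsTrans (Fin n) r] (X : Finset (Fin n)) : IsIdeal r (idealCl r X) := by
  simp only [IsIdeal, idealCl, mem_filter, mem_univ, true_and]
  rintro a ⟨c, hc, hac⟩ b hba
  exact ⟨c, hc, _root_.trans hba hac⟩

theorem idealCl_subset_iff [Std.Refl r] {S X : Finset (Fin n)} (hS : IsIdeal r S) :
    idealCl r X ⊆ S ↔ X ⊆ S := by
  refine ⟨fun h a ha => h (mem_filter.2 ⟨mem_univ _, a, ha, refl_of r a⟩), fun h b hb => ?_⟩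
  obtain ⟨a, ha, hba⟩ := (mem_filter.1 hb).2
  exact hS a (h ha) b hba

theorem IsIdeal.map_perm {A K : Finset (Fin n)} {σ : Equiv.Perm (Fin n)}
    (hA : IsIdeal r (A.map σ.toEmbedding)) (hσ : ∀ a ∈ A, ∀ b ∈ A, r a b ↔ r (σ a) (σ b))
    (hK : IsIdeal r K) (hKA : K ⊆ A) : IsIdeal r (K.map σ.toEmbedding) := by
  intro y hy z hzy
  obtain ⟨x, hx, rfl⟩ := mem_map.1 hy
  obtain ⟨w, hw, rfl⟩ := mem_map.1 (hA _ (map_subset_map.2 hKA hy) z hzy)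
  exact mem_map_of_mem _ (hK x hx w ((hσ w hw x (hKA hx)).2 hzy))

end Ideals

section Counting

variable {n : ℕ} {r : Fin n → Fin n → Prop}

def isoIdealsIn (r : Fin n → Fin n → Prop) (J L : Finset (Fin n)) : Finset (Finset (Fin n)) :=
  {K ∈ ideals r | K ⊆ L ∧ OrdIso r K J}

def isoIdealsAbove (r : Fin n → Fin n → Prop) (J M : Finset (Fin n)) :
    Finset (Finset (Fin n)) :=
  {K ∈ ideals r | M ⊆ K ∧ OrdIso r K J}

def IsComplIso (r : Fin n → Fin n → Prop) : Prop :=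
  ∀ I J : Finset (Fin n), IsIdeal r I → IsIdeal r J → (OrdIso r I J ↔ OrdIso r Iᶜ Jᶜ)

theorem card_isoIdealsIn_le_of_ordIso {J L L' : Finset (Fin n)} (hL' : IsIdeal r L')
    (h : OrdIso r L L') : #(isoIdealsIn r J L) ≤ #(isoIdealsIn r J L') := by
  obtain ⟨σ, hLσ, hσ⟩ := h.exists_perm
  refine card_le_card_of_injOn (fun K => K.map σ.toEmbedding) (fun K hK => ?_)
    (map_injective _).injOn
  simp only [isoIdealsIn, coe_filter, mem_ideals, Set.mem_ofPred_eq] at hK ⊢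
  obtain ⟨hK, hKL, hKJ⟩ := hK
  refine ⟨IsIdeal.map_perm (hLσ ▸ hL') hσ hK hKL, hLσ ▸ map_subset_map.2 hKL, ?_⟩
  exact ordIso_equivalence.trans
    (ordIso_equivalence.symm (ordIso_map fun a ha b hb => hσ a (hKL ha) b (hKL hb))) hKJ

theorem card_isoIdealsIn_eq_of_ordIso {J L L' : Finset (Fin n)} (hL : IsIdeal r L)
    (hL' : IsIdeal r L') (h : OrdIso r L L') : #(isoIdealsIn r J L) = #(isoIdealsIn r J L') :=
  (card_isoIdealsIn_le_of_ordIso hL' h).antisymm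
    (card_isoIdealsIn_le_of_ordIso hL (ordIso_equivalence.symm h))

theorem compl_mem_isoIdealsIn_iff (hP : IsComplIso r) {J M K : Finset (Fin n)}
    (hJ : IsIdeal r J) : Kᶜ ∈ isoIdealsIn (fun a b => r b a) Jᶜ Mᶜ ↔ K ∈ isoIdealsAbove r J M := by
  simp only [isoIdealsIn, isoIdealsAbove, mem_filter, mem_ideals, compl_subset_compl,
    ordIso_swap_iff]
  rw [isIdeal_compl_iff]
  exact ⟨fun ⟨hK, hMK, hKJ⟩ => ⟨hK, hMK, (hP K J hK hJ).2 hKJ⟩,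
    fun ⟨hK, hMK, hKJ⟩ => ⟨hK, hMK, (hP K J hK hJ).1 hKJ⟩⟩

theorem card_isoIdealsAbove_eq_of_ordIso (hP : IsComplIso r) {J M M' : Finset (Fin n)}
    (hJ : IsIdeal r J) (hM : IsIdeal r M) (hM' : IsIdeal r M') (h : OrdIso r M M') :
    #(isoIdealsAbove r J M) = #(isoIdealsAbove r J M') := by
  have hcompl : ∀ {M}, #(isoIdealsAbove r J M) = #(isoIdealsIn (fun a b => r b a) Jᶜ Mᶜ) :=
    card_nbij' compl compl (fun K hK => (compl_mem_isoIdealsIn_iff hP hJ).2 hK)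
      (fun K hK => (compl_mem_isoIdealsIn_iff hP hJ).1 (by rwa [compl_compl]))
      (fun K _ => compl_compl K) (fun K _ => compl_compl K)
  rw [hcompl, hcompl]
  exact card_isoIdealsIn_eq_of_ordIso (isIdeal_compl_iff.2 hM) (isIdeal_compl_iff.2 hM')
    (ordIso_swap_iff.2 ((hP M M' hM hM').1 h))

theorem sum_sum_superset_eq_add (x : Finset (Fin n) → ℕ) (J : Finset (Fin n)) :
    ∑ K ∈ ideals r with OrdIso r K J, ∑ L ∈ ideals r with K ⊆ L, x L =
      ∑ K ∈ ideals r with OrdIso r K J, x K +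
        ∑ L ∈ ideals r with #J < #L, #(isoIdealsIn r J L) * x L := by
  have hsplit : ∀ K ∈ ideals r, ∑ L ∈ ideals r with K ⊆ L, x L =
      x K + ∑ L ∈ ideals r with K ⊂ L, x L := by
    intro K hK
    rw [← sum_insert (by simp)]
    congr 1
    ext L
    simp only [mem_filter, mem_insert]
    constructor
    · rintro ⟨hL, hKL⟩
      exact (eq_or_ssubset_of_subset hKL).imp Eq.symm fun h => ⟨hL, h⟩
    · rintro (rfl | ⟨hL, hKL⟩)
      exacts [⟨hK, subset_rfl⟩, ⟨hL, hKL.subset⟩]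
  rw [sum_congr rfl fun K hK => hsplit K (mem_filter.1 hK).1, sum_add_distrib]
  congr 1
  rw [sum_comm' (t' := {L ∈ ideals r | #J < #L}) (s' := isoIdealsIn r J) ?_]
  · simp only [sum_const, smul_eq_mul]
  intro K L
  simp only [isoIdealsIn, mem_filter]
  constructor
  · rintro ⟨⟨hK, hKJ⟩, hL, hKL⟩
    exact ⟨⟨hK, hKL.subset, hKJ⟩, hL, hKJ.card_eq ▸ card_lt_card hKL⟩
  · rintro ⟨⟨hK, hKL, hKJ⟩, hL, hJL⟩
    refine ⟨⟨hK, hKJ⟩, hL, Finset.ssubset_iff_subset_ne.2 ⟨hKL, ?_⟩⟩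
    rintro rfl
    exact (hKJ.card_eq ▸ hJL).false

theorem sum_classes_eq_of_sum_classes_sum_superset_eq {x y : Finset (Fin n) → ℕ}
    (h : ∀ J ∈ ideals r, ∑ K ∈ ideals r with OrdIso r K J, ∑ L ∈ ideals r with K ⊆ L, x L =
      ∑ K ∈ ideals r with OrdIso r K J, ∑ L ∈ ideals r with K ⊆ L, y L) :
    ∀ J ∈ ideals r, ∑ K ∈ ideals r with OrdIso r K J, x K =
      ∑ K ∈ ideals r with OrdIso r K J, y K := by
  intro J hJ
  induction hk : n - #J using Nat.strong_induction_on generalizing J with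
  | _ k ih =>
  have hlarger : ∑ L ∈ ideals r with #J < #L, #(isoIdealsIn r J L) * x L =
      ∑ L ∈ ideals r with #J < #L, #(isoIdealsIn r J L) * y L := by
    refine sum_mul_eq_of_sum_classes_eq (ordIso_equivalence (r := r)) (fun L hL L' hL' hLL' => ?_)
      (fun L hL => ?_)
    · simp only [mem_filter, mem_ideals] at hL hL'
      exact card_isoIdealsIn_eq_of_ordIso hL.1 hL'.1 hLL'
    · rw [mem_filter] at hL
      have hclass : {L' ∈ {L ∈ ideals r | #J < #L} | OrdIso r L' L} =
          {L' ∈ ideals r | OrdIso r L' L} := by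
        ext L'
        simp only [mem_filter, and_assoc, and_congr_right_iff, and_iff_right_iff_imp]
        exact fun _ hL'L => hL'L.card_eq ▸ hL.2
      have hcard : #L ≤ n := by simpa using card_le_univ L
      rw [hclass]
      exact ih (n - #L) (by omega) L hL.1 rfl
  have hJ' := h J hJ
  rwa [sum_sum_superset_eq_add, sum_sum_superset_eq_add, hlarger, Nat.add_right_cancel_iff] at hJ'

end Counting

section Codes

variable {n : ℕ} {F : Type} [Field F] [Fintype F] {r : Fin n → Fin n → Prop}

theorem dot_comm (u v : Fin n → F) : dot u v = dot v u := dotProduct_comm u v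

theorem dot_smul (u v : Fin n → F) (c : F) : dot u (c • v) = c * dot u v := dotProduct_smul c u v

theorem sum_addChar_dot {ψ : AddChar F ℂ} (hψ : ψ 1 ≠ 1) (W : Submodule F (Fin n → F))
    (u : Fin n → F) :
    ∑ v ∈ {v | v ∈ W}, ψ (dot u v) = if u ∈ dualCode W then (#{v | v ∈ W} : ℂ) else 0 := by
  split_ifs with hu
  · rw [sum_congr rfl fun v hv => by rw [hu v (mem_filter.1 hv).2, AddChar.map_zero_eq_one],
      sum_const, nsmul_one]
  · obtain ⟨w, hwW, hw⟩ : ∃ w ∈ W, dot u w ≠ 0 := by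
      simpa [dualCode] using hu
    let χ : AddChar W ℂ :=
      ψ.compAddMonoidHom ((dotProductBilin F F u).comp W.subtype).toAddMonoidHom
    have hχ : χ ≠ 1 := AddChar.ne_one_iff.2 ⟨(dot u w)⁻¹ • ⟨w, hwW⟩, by
      change ψ (dot u ((dot u w)⁻¹ • w)) ≠ 1
      rwa [dot_smul, inv_mul_cancel₀ hw]⟩
    rw [sum_subtype (p := (· ∈ W)) _ (by simp) fun v => ψ (dot u v)]
    exact AddChar.sum_eq_zero_of_ne_one hχ

def supportedIn (S : Finset (Fin n)) : Submodule F (Fin n → F) where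
  carrier := {v | ∀ i ∉ S, v i = 0}
  add_mem' ha hb i hi := by simp [ha i hi, hb i hi]
  zero_mem' _ _ := rfl
  smul_mem' c v hv i hi := by simp [hv i hi]

theorem mem_supportedIn {S : Finset (Fin n)} {v : Fin n → F} :
    v ∈ supportedIn S ↔ supp v ⊆ S := by
  simp [supportedIn, supp, subset_iff, not_imp_comm]

theorem card_supportedIn (S : Finset (Fin n)) :
    #{v : Fin n → F | v ∈ supportedIn S} = Fintype.card F ^ #S := by
  have : ({v | v ∈ supportedIn S} : Finset (Fin n → F)) =
      Fintype.piFinset fun i => if i ∈ S then univ else {0} := by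
    ext v
    simp only [mem_filter, mem_univ, true_and, mem_supportedIn, supp, subset_iff,
      Fintype.mem_piFinset]
    refine forall_congr' fun i => ?_
    by_cases hi : i ∈ S <;> simp [hi]
  rw [this, Fintype.card_piFinset]
  simp [apply_ite, prod_ite_mem]

theorem mem_dualCode_supportedIn {S : Finset (Fin n)} {v : Fin n → F} :
    v ∈ dualCode (supportedIn S) ↔ supp v ⊆ Sᶜ := by
  constructor
  · intro hv i hi
    rw [mem_compl]
    intro hiS
    have h0 := hv (Pi.single i 1) fun j hj => Pi.single_eq_of_ne (by rintro rfl; exact hj hiS) 1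
    change v ⬝ᵥ Pi.single i 1 = 0 at h0
    rw [dotProduct_single, mul_one] at h0
    exact (mem_filter.1 hi).2 h0
  · intro hv u hu
    refine sum_eq_zero fun i _ => ?_
    by_cases hvi : v i = 0
    · rw [hvi, zero_mul]
    · rw [hu i (mem_compl.1 (hv (mem_filter.2 ⟨mem_univ i, hvi⟩))), mul_zero]

def suppCount (C : Submodule F (Fin n → F)) (S : Finset (Fin n)) : ℕ :=
  #{v | v ∈ C ∧ supp v ⊆ S}

theorem card_mul_suppCount_dualCode (C : Submodule F (Fin n → F)) (S : Finset (Fin n)) :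
    #{v | v ∈ C} * suppCount (dualCode C) S = Fintype.card F ^ #S * suppCount C Sᶜ := by
  obtain ⟨ψ, hψ⟩ := AddChar.exists_apply_ne_zero.2 (one_ne_zero : (1 : F) ≠ 0)
  suffices h : (#{v | v ∈ C} * suppCount (dualCode C) S : ℂ) =
      Fintype.card F ^ #S * suppCount C Sᶜ by exact_mod_cast h
  calc (#{v | v ∈ C} * suppCount (dualCode C) S : ℂ)
      = ∑ u ∈ {u | u ∈ supportedIn S}, ∑ v ∈ {v | v ∈ C}, ψ (dot u v) := by
        rw [sum_congr rfl fun u _ => sum_addChar_dot hψ C u, ← sum_filter, sum_const,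
          nsmul_eq_mul, filter_filter, suppCount]
        simp_rw [mem_supportedIn, and_comm]
        exact mul_comm _ _
    _ = ∑ v ∈ {v | v ∈ C}, ∑ u ∈ {u | u ∈ supportedIn S}, ψ (dot v u) := by
        rw [sum_comm]
        simp_rw [dot_comm]
    _ = Fintype.card F ^ #S * suppCount C Sᶜ := by
        rw [sum_congr rfl fun v _ => sum_addChar_dot hψ (supportedIn S) v, ← sum_filter,
          sum_const, nsmul_eq_mul, card_supportedIn, filter_filter, suppCount]
        simp_rw [mem_dualCode_supportedIn]
        push_cast
        exact mul_comm _ _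

theorem AE_eq_sum [IsTrans (Fin n) r] (E : Finset (Fin n) → Finset (Fin n) → Prop)
    (C : Submodule F (Fin n → F)) (I : Finset (Fin n)) :
    AE r E C I = ∑ M ∈ ideals r with E M I, #{v ∈ sph F r M | v ∈ C} := by
  rw [AE, card_eq_sum_card_fiberwise (f := fun v => idealCl r (supp v)) fun v hv => ?_]
  · refine sum_congr rfl fun M hM => congrArg card ?_
    ext v
    simp only [sphE, sph, mem_filter, mem_univ, true_and]
    constructor
    · rintro ⟨⟨-, hC⟩, hvM⟩
      exact ⟨hvM, hC⟩
    · rintro ⟨rfl, hC⟩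
      exact ⟨⟨(mem_filter.1 hM).2, hC⟩, rfl⟩
  · simp only [sphE, mem_coe, mem_filter, mem_univ, true_and] at hv ⊢
    exact ⟨mem_ideals.2 (isIdeal_idealCl _), hv.1⟩

theorem AED_eq_sum (E : Finset (Fin n) → Finset (Fin n) → Prop)
    (D : Submodule F (Fin n → F)) (J : Finset (Fin n)) :
    AED r E D J = ∑ K ∈ ideals r with E K J, #{v ∈ sphD F r K | v ∈ D} := by
  rw [AED, card_eq_sum_card_fiberwise (f := fun v => (idealCl (fun a b => r b a) (supp v))ᶜ)
    fun v hv => ?_]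
  · refine sum_congr rfl fun K hK => congrArg card ?_
    ext v
    simp only [sphED, sphD, mem_filter, mem_univ, true_and, compl_eq_comm]
    constructor
    · rintro ⟨⟨-, hD⟩, hvK⟩
      exact ⟨hvK.symm, hD⟩
    · rintro ⟨hvK, hD⟩
      exact ⟨⟨⟨K, mem_ideals.1 (mem_filter.1 hK).1, (mem_filter.1 hK).2, hvK⟩, hD⟩, hvK.symm⟩
  · simp only [sphED, mem_coe, mem_filter, mem_univ, true_and] at hv ⊢
    obtain ⟨⟨K, hK, hKJ, hvK⟩, -⟩ := hv
    rw [hvK, compl_compl]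
    exact ⟨mem_ideals.2 hK, hKJ⟩

theorem suppCount_eq_sum [Std.Refl r] [IsTrans (Fin n) r] (C : Submodule F (Fin n → F))
    {S : Finset (Fin n)} (hS : IsIdeal r S) :
    suppCount C S = ∑ M ∈ ideals r with M ⊆ S, #{v ∈ sph F r M | v ∈ C} := by
  rw [suppCount, card_eq_sum_card_fiberwise (f := fun v => idealCl r (supp v)) fun v hv => ?_]
  · refine sum_congr rfl fun M hM => congrArg card ?_
    ext v
    simp only [sph, mem_filter, mem_univ, true_and]
    constructor
    · rintro ⟨⟨hC, -⟩, hvM⟩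
      exact ⟨hvM, hC⟩
    · rintro ⟨rfl, hC⟩
      exact ⟨⟨hC, (idealCl_subset_iff hS).1 (mem_filter.1 hM).2⟩, rfl⟩
  · simp only [mem_coe, mem_filter, mem_univ, true_and] at hv ⊢
    exact ⟨mem_ideals.2 (isIdeal_idealCl _), (idealCl_subset_iff hS).2 hv.2⟩

theorem suppCount_compl_eq_sum [Std.Refl r] [IsTrans (Fin n) r] (D : Submodule F (Fin n → F))
    {K : Finset (Fin n)} (hK : IsIdeal r K) :
    suppCount D Kᶜ = ∑ L ∈ ideals r with K ⊆ L, #{v ∈ sphD F r L | v ∈ D} := by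
  rw [suppCount_eq_sum D (isIdeal_compl_iff.2 hK)]
  refine sum_nbij' compl compl (fun U hU => ?_) (fun L hL => ?_) (fun U _ => compl_compl U)
    (fun L _ => compl_compl L) fun U _ => by simp only [sph, sphD, compl_compl]
  · simp only [mem_filter, mem_ideals] at hU ⊢
    exact ⟨isIdeal_compl_iff.2 hU.1, subset_compl_comm.1 hU.2⟩
  · simp only [mem_filter, mem_ideals] at hL ⊢
    exact ⟨isIdeal_compl_iff.2 hL.1, compl_subset_compl.2 hL.2⟩

theorem card_eq_sum_sph [Std.Refl r] [IsTrans (Fin n) r] (C : Submodule F (Fin n → F)) :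
    #{v | v ∈ C} = ∑ M ∈ ideals r, #{v ∈ sph F r M | v ∈ C} := by
  simpa [suppCount] using suppCount_eq_sum C (isIdeal_univ (r := r))

theorem card_mul_sum_suppCount_dualCode [Std.Refl r] [IsTrans (Fin n) r]
    (C : Submodule F (Fin n → F)) (J : Finset (Fin n)) :
    #{v | v ∈ C} * ∑ K ∈ ideals r with OrdIso r K J, suppCount (dualCode C) Kᶜ =
      Fintype.card F ^ (n - #J) *
        ∑ M ∈ ideals r, #(isoIdealsAbove r J M) * #{v ∈ sph F r M | v ∈ C} := by
  calc #{v | v ∈ C} * ∑ K ∈ ideals r with OrdIso r K J, suppCount (dualCode C) Kᶜ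
      = ∑ K ∈ ideals r with OrdIso r K J,
          Fintype.card F ^ (n - #J) * ∑ M ∈ ideals r with M ⊆ K, #{v ∈ sph F r M | v ∈ C} := by
        rw [mul_sum]
        refine sum_congr rfl fun K hK => ?_
        obtain ⟨hK, hKJ⟩ := mem_filter.1 hK
        rw [card_mul_suppCount_dualCode, compl_compl, card_compl, Fintype.card_fin, hKJ.card_eq,
          suppCount_eq_sum C (mem_ideals.1 hK)]
    _ = _ := by
        rw [← mul_sum, sum_comm' (t' := ideals r) (s' := isoIdealsAbove r J) ?_]
        · simp only [sum_const, smul_eq_mul]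
        intro K M
        simp only [isoIdealsAbove, mem_filter]
        tauto

end Codes

section MacWilliams

variable {n : ℕ} {r : Fin n → Fin n → Prop} [Std.Refl r] [IsTrans (Fin n) r]
  {F : Type} [Field F] [Fintype F]

theorem card_eq_of_sum_classes_sph_eq {C₁ C₂ : Submodule F (Fin n → F)}
    (h : ∀ M ∈ ideals r, ∑ M' ∈ ideals r with OrdIso r M' M, #{v ∈ sph F r M' | v ∈ C₁} =
      ∑ M' ∈ ideals r with OrdIso r M' M, #{v ∈ sph F r M' | v ∈ C₂}) :
    #{v | v ∈ C₁} = #{v | v ∈ C₂} := by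
  simpa [← card_eq_sum_sph] using
    sum_mul_eq_of_sum_classes_eq ordIso_equivalence (w := fun _ => 1) (fun _ _ _ _ _ => rfl) h

theorem sum_classes_suppCount_dualCode_eq (hP : IsComplIso r) {C₁ C₂ : Submodule F (Fin n → F)}
    (h : ∀ M ∈ ideals r, ∑ M' ∈ ideals r with OrdIso r M' M, #{v ∈ sph F r M' | v ∈ C₁} =
      ∑ M' ∈ ideals r with OrdIso r M' M, #{v ∈ sph F r M' | v ∈ C₂}) :
    ∀ J ∈ ideals r, ∑ K ∈ ideals r with OrdIso r K J, suppCount (dualCode C₁) Kᶜ =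
      ∑ K ∈ ideals r with OrdIso r K J, suppCount (dualCode C₂) Kᶜ := by
  intro J hJ
  refine Nat.eq_of_mul_eq_mul_left (card_pos.2 ⟨0, mem_filter.2 ⟨mem_univ _, C₁.zero_mem⟩⟩) ?_
  rw [card_mul_sum_suppCount_dualCode, card_eq_of_sum_classes_sph_eq h,
    card_mul_sum_suppCount_dualCode, sum_mul_eq_of_sum_classes_eq ordIso_equivalence
      (fun M hM M' hM' hMM' => card_isoIdealsAbove_eq_of_ordIso hP (mem_ideals.1 hJ)
        (mem_ideals.1 hM) (mem_ideals.1 hM') hMM') h]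

theorem sum_classes_sphD_eq {D₁ D₂ : Submodule F (Fin n → F)}
    (h : ∀ J ∈ ideals r, ∑ K ∈ ideals r with OrdIso r K J, suppCount D₁ Kᶜ =
      ∑ K ∈ ideals r with OrdIso r K J, suppCount D₂ Kᶜ) :
    ∀ J ∈ ideals r, ∑ K ∈ ideals r with OrdIso r K J, #{v ∈ sphD F r K | v ∈ D₁} =
      ∑ K ∈ ideals r with OrdIso r K J, #{v ∈ sphD F r K | v ∈ D₂} := by
  refine sum_classes_eq_of_sum_classes_sum_superset_eq fun J hJ => ?_
  have hsuperset : ∀ D : Submodule F (Fin n → F),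
      ∑ K ∈ ideals r with OrdIso r K J, ∑ L ∈ ideals r with K ⊆ L, #{v ∈ sphD F r L | v ∈ D} =
        ∑ K ∈ ideals r with OrdIso r K J, suppCount D Kᶜ := fun D =>
    sum_congr rfl fun K hK => (suppCount_compl_eq_sum D (mem_ideals.1 (mem_filter.1 hK).1)).symm
  rw [hsuperset, hsuperset]
  exact h J hJ

end MacWilliams

theorem stmt_17_general {n : ℕ} (le : Fin n → Fin n → Prop)
    [IsPartialOrder (Fin n) le]
    (F : Type) [Field F] [Fintype F]
    (hcomp : ∀ I J : Finset (Fin n), IsIdeal le I → IsIdeal le J →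
      (OrdIso le I J ↔ OrdIso le Iᶜ Jᶜ)) :
    IsMacWilliamsType F le (OrdIso le) := by
  intro C₁ C₂ hA J hJ
  have hclass : ∀ M ∈ ideals le,
      ∑ M' ∈ ideals le with OrdIso le M' M, #{v ∈ sph F le M' | v ∈ C₁} =
        ∑ M' ∈ ideals le with OrdIso le M' M, #{v ∈ sph F le M' | v ∈ C₂} := fun M hM => by
    rw [← AE_eq_sum, ← AE_eq_sum]
    exact hA M (mem_ideals.1 hM)
  rw [AED_eq_sum, AED_eq_sum]
  exact sum_classes_sphD_eq (sum_classes_suppCount_dualCode_eq hcomp hclass) J (mem_ideals.2 hJ)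

/-- Theorem 4.1(iii), (a) ⇒ (b): if `P` is a complement isomorphism poset then `E_S` is of
MacWilliams type. -/
theorem stmt_17 {n : ℕ} (hn : 0 < n) (le : Fin n → Fin n → Prop)
    [IsPartialOrder (Fin n) le]
    (F : Type) [Field F] [Fintype F]
    (hcomp : ∀ I J : Finset (Fin n), IsIdeal le I → IsIdeal le J →
      (OrdIso le I J ↔ OrdIso le Iᶜ Jᶜ)) :
    IsMacWilliamsType F le (OrdIso le) :=
  stmt_17_general le F hcomp

end
end
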